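/- arXiv:1602.03575 — 5 statements merged into one kernel-verified Lean document; each statement's English description precedes it below -/
import Mathlib

section
/- Let G ≤ Aut(T) be geometrically dense and act without inversions, and let N ≤ Aut(T) be a nontrivial subgroup normalized by G. Then N is geometrically dense. -/
/-!
STATEMENT 5.  Let G ≤ Aut(T) be geometrically dense and act without inversions, and let
N ≤ Aut(T) be a nontrivial subgroup normalized by G.  Then N is geometrically dense.
-/

def IsTreeAut {V : Type*} (T : SimpleGraph V) (g : Equiv.Perm V) : Prop :=
  ∀ u v : V, T.Adj (g u) (g v) ↔ T.Adj u v

def IsInversion {V : Type*} (T : SimpleGraph V) (g : Equiv.Perm V) : Prop :=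
  ∃ u v : V, T.Adj u v ∧ g u = v ∧ g v = u

def NotLine {V : Type*} (T : SimpleGraph V) : Prop :=
  ¬ ∀ v : V, (T.neighborSet v).ncard = 2

def IsConvex {V : Type*} (T : SimpleGraph V) (X : Set V) : Prop :=
  ∀ u ∈ X, ∀ v ∈ X, ∀ p : T.Walk u v, p.IsPath → ∀ w ∈ p.support, w ∈ X

def IsRay {V : Type*} (T : SimpleGraph V) (r : ℕ → V) : Prop :=
  (∀ n, T.Adj (r n) (r (n+1))) ∧ Function.Injective r

def RayEquiv {V : Type*} (r s : ℕ → V) : Prop :=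
  ∃ m n : ℕ, ∀ i : ℕ, r (m + i) = s (n + i)

/-- A set S of automorphisms is geometrically dense if it fixes no end of T and stabilizes
(setwise) no proper nonempty subtree of T. -/
def GeomDense {V : Type*} (T : SimpleGraph V) (S : Set (Equiv.Perm V)) : Prop :=
  (¬ ∃ r : ℕ → V, IsRay T r ∧ ∀ g ∈ S, RayEquiv (fun n => g (r n)) r) ∧
  ¬ ∃ Y : Set V, Y.Nonempty ∧ IsConvex T Y ∧ Y ≠ Set.univ ∧ ∀ g ∈ S, ∀ v ∈ Y, g v ∈ Y

/-!
A subtree of `T` is a set containing, with any two vertices `u` and `v`, the interval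
`{w | d u w + d w v = d u v}`; each subtree `Y` has a gate from every vertex `v`, a vertex of `Y`
lying on all geodesics from `v` to `Y`.

`N` stabilizes no proper subtree. First, `N` fixes no vertex, since its fixed-point set would be
a proper `G`-invariant subtree. Hence two `N`-invariant subtrees meet, for otherwise the gate of
one in the other is fixed by `N`. If `Y` is a proper `N`-invariant subtree, its `G`-translates
are `N`-invariant, hence pairwise meet, hence all their finite intersections are nonempty
(Helly). If all translates share a vertex, their intersection is a proper `G`-invariant subtree;
if not, the gates of the finite intersections from a fixed vertex run off to an end fixed by `G`.

`N` fixes no end. If it fixes the end of `r`, some `h ∈ G` moves that end, and `N` also fixes the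
end of `h ∘ r`, so it preserves the line joining the two ends. Being no proper subtree, that line
is all of `T`, so every vertex has degree two.
-/

open SimpleGraph Filter

namespace SimpleGraph

variable {V : Type*} {T : SimpleGraph V} {Y Z : Set V} {u v w x z a : V}

def interval (T : SimpleGraph V) (u v : V) : Set V :=
  {w | T.dist u w + T.dist w v = T.dist u v}

theorem mem_interval : w ∈ T.interval u v ↔ T.dist u w + T.dist w v = T.dist u v := Iff.rfl

theorem left_mem_interval : u ∈ T.interval u v := by simp [mem_interval]

theorem right_mem_interval : v ∈ T.interval u v := by simp [mem_interval]

theorem interval_comm (T : SimpleGraph V) (u v : V) : T.interval u v = T.interval v u := by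
  ext w; simp only [mem_interval, dist_comm]; omega

theorem Connected.interval_subset_interval_left (hc : T.Connected) (h : v ∈ T.interval u x) :
    T.interval u v ⊆ T.interval u x := fun w hw => by
  have := hc.dist_triangle (u := w) (v := v) (w := x)
  have := hc.dist_triangle (u := u) (v := w) (w := x)
  simp only [mem_interval] at *; omega

theorem Connected.interval_subset_interval_right (hc : T.Connected) (h : v ∈ T.interval u x) :
    T.interval v x ⊆ T.interval u x := by
  rw [interval_comm] at h; rw [T.interval_comm v, T.interval_comm u]
  exact hc.interval_subset_interval_left h

def IsGate (T : SimpleGraph V) (Y : Set V) (v a : V) : Prop :=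
  a ∈ Y ∧ ∀ y ∈ Y, a ∈ T.interval v y

theorem IsGate.eq_of_mem_interval (hc : T.Connected) (ha : T.IsGate Y v a) (hw : w ∈ Y)
    (hwa : w ∈ T.interval v a) : w = a := by
  have := ha.2 w hw
  have := T.dist_comm (u := a) (v := w)
  simp only [mem_interval] at *
  exact (hc.dist_eq_zero_iff.1 (by omega)).symm

namespace IsTree

theorem dist_eq_length (hT : T.IsTree) {p : T.Walk u v} (hp : p.IsPath) :
    T.dist u v = p.length := by
  obtain ⟨q, hq, hlen⟩ := hT.connected.exists_path_of_dist u v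
  rw [← hlen, (hT.existsUnique_path u v).unique hp hq]

theorem mem_support_iff_mem_interval (hT : T.IsTree) {p : T.Walk u v} (hp : p.IsPath) :
    w ∈ p.support ↔ w ∈ T.interval u v := by
  constructor
  · intro hw
    obtain ⟨q, r, hq, hr, rfl⟩ := hp.mem_support_iff_exists_append.1 hw
    rw [mem_interval, hT.dist_eq_length hq, hT.dist_eq_length hr, hT.dist_eq_length hp,
      Walk.length_append]
  · intro hw
    obtain ⟨q, hq, hql⟩ := hT.connected.exists_path_of_dist u w
    obtain ⟨r, hr, hrl⟩ := hT.connected.exists_path_of_dist w v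
    have hqr : (q.append r).IsPath :=
      (q.append r).isPath_of_length_eq_dist (by rw [Walk.length_append, hql, hrl, hw])
    rw [(hT.existsUnique_path u v).unique hp hqr]
    exact (Walk.mem_support_append_iff _ _).2 (.inl q.end_mem_support)

theorem interval_subset_union (hT : T.IsTree) (u v x : V) :
    T.interval u v ⊆ T.interval u x ∪ T.interval x v := by
  classical
  intro w hw
  obtain ⟨p, hp, -⟩ := hT.connected.exists_path_of_dist u x
  obtain ⟨q, hq, -⟩ := hT.connected.exists_path_of_dist x v
  rw [← hT.mem_support_iff_mem_interval (p.append q).bypass_isPath] at hw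
  rcases (Walk.mem_support_append_iff _ _).1
    ((p.append q).support_bypass_subset_support hw) with h | h
  · exact .inl ((hT.mem_support_iff_mem_interval hp).1 h)
  · exact .inr ((hT.mem_support_iff_mem_interval hq).1 h)

theorem mem_interval_of_inter (hT : T.IsTree)
    (h : ∀ x ∈ T.interval u w, x ∈ T.interval w v → x = w) : w ∈ T.interval u v := by
  obtain ⟨p, hp, -⟩ := hT.connected.exists_path_of_dist u w
  obtain ⟨q, hq, -⟩ := hT.connected.exists_path_of_dist w v
  have hpq : (p.append q).IsPath := by
    rw [Walk.isPath_def, Walk.support_append, List.nodup_append]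
    refine ⟨hp.support_nodup, hq.support_nodup.sublist q.support.tail_sublist, ?_⟩
    rintro x hxp _ hxq rfl
    rw [h x ((hT.mem_support_iff_mem_interval hp).1 hxp)
      ((hT.mem_support_iff_mem_interval hq).1 (q.support.mem_of_mem_tail hxq))] at hxq
    have hnd := hq.support_nodup
    rw [← q.cons_tail_support] at hnd
    exact (List.nodup_cons.1 hnd).1 hxq
  exact (hT.mem_support_iff_mem_interval hpq).1 ((Walk.mem_support_append_iff _ _).2 (.inl p.end_mem_support))

theorem mem_interval_of_dist_le (hT : T.IsTree) {w' : V} (hw : w ∈ T.interval u z)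
    (hw' : w' ∈ T.interval u z) (h : T.dist u w ≤ T.dist u w') : w ∈ T.interval u w' := by
  rcases hT.interval_subset_union u z w hw' with h' | h'
  · have : T.dist w' w = 0 := by simp only [mem_interval] at h'; omega
    rw [hT.connected.dist_eq_zero_iff.1 this]; exact right_mem_interval
  · simp only [mem_interval] at *; omega

theorem mem_interval_right_of_dist_le (hT : T.IsTree) {w' : V} (hw : w ∈ T.interval u z)
    (hw' : w' ∈ T.interval u z) (h : T.dist u w ≤ T.dist u w') : w' ∈ T.interval w z := by
  have := hT.mem_interval_of_dist_le hw hw' h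
  simp only [mem_interval] at *; omega

theorem eq_of_mem_interval (hT : T.IsTree) {w' : V} (hw : w ∈ T.interval u z)
    (hw' : w' ∈ T.interval u z) (h : T.dist u w = T.dist u w') : w = w' := by
  have := hT.mem_interval_of_dist_le hw hw' h.le
  simp only [mem_interval] at this
  exact hT.connected.dist_eq_zero_iff.1 (by omega)

theorem exists_mem_interval_dist_eq (hT : T.IsTree) (u v : V) {k : ℕ} (hk : k ≤ T.dist u v) :
    ∃ w ∈ T.interval u v, T.dist u w = k := by
  obtain ⟨p, hp, hlen⟩ := hT.connected.exists_path_of_dist u v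
  refine ⟨p.getVert k, (hT.mem_support_iff_mem_interval hp).1 (p.getVert_mem_support k), ?_⟩
  rw [hT.dist_eq_length (hp.take k), Walk.take_length]
  omega

theorem dist_map (hT : T.IsTree) {θ : Equiv.Perm V} (hθ : IsTreeAut T θ) (u v : V) :
    T.dist (θ u) (θ v) = T.dist u v := by
  obtain ⟨p, hp, hlen⟩ := hT.connected.exists_path_of_dist u v
  have := hT.dist_eq_length (hp.map (f := ⟨θ, (hθ _ _).2⟩) θ.injective)
  rwa [Walk.length_map, hlen] at this

theorem map_mem_interval_iff (hT : T.IsTree) {θ : Equiv.Perm V} (hθ : IsTreeAut T θ) :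
    θ w ∈ T.interval (θ u) (θ v) ↔ w ∈ T.interval u v := by
  simp only [mem_interval, hT.dist_map hθ]

theorem isConvex_iff (hT : T.IsTree) : IsConvex T Y ↔ ∀ u ∈ Y, ∀ v ∈ Y, T.interval u v ⊆ Y := by
  refine ⟨fun h u hu v hv w hw => ?_,
    fun h u hu v hv p hp w hw => h u hu v hv ((hT.mem_support_iff_mem_interval hp).1 hw)⟩
  obtain ⟨p, hp, -⟩ := hT.connected.exists_path_of_dist u v
  exact h u hu v hv p hp w ((hT.mem_support_iff_mem_interval hp).2 hw)

theorem isConvex_interval (hT : T.IsTree) (u v : V) : IsConvex T (T.interval u v) := by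
  have key : ∀ u' ∈ T.interval u v, ∀ v' ∈ T.interval u v, T.dist u u' ≤ T.dist u v' →
      T.interval u' v' ⊆ T.interval u v := by
    intro u' hu' v' hv' hle x hx
    have := hT.mem_interval_of_dist_le hu' hv' hle
    have := hT.connected.dist_triangle (u := u) (v := u') (w := x)
    have := hT.connected.dist_triangle (u := x) (v := v') (w := v)
    have := hT.connected.dist_triangle (u := u) (v := x) (w := v)
    simp only [mem_interval] at *; omega
  refine hT.isConvex_iff.2 fun u' hu' v' hv' => ?_
  rcases le_total (T.dist u u') (T.dist u v') with h | h
  · exact key u' hu' v' hv' h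
  · rw [interval_comm]; exact key v' hv' u' hu' h

theorem isConvex_preimage (hT : T.IsTree) {θ : Equiv.Perm V} (hθ : IsTreeAut T θ)
    (hY : IsConvex T Y) : IsConvex T (θ ⁻¹' Y) :=
  hT.isConvex_iff.2 fun _ hu _ hv _ hw =>
    hT.isConvex_iff.1 hY _ hu _ hv ((hT.map_mem_interval_iff hθ).2 hw)

theorem exists_isGate (hT : T.IsTree) (hY : IsConvex T Y) (hne : Y.Nonempty) (v : V) :
    ∃ a, T.IsGate Y v a := by
  obtain ⟨a, ha, hmin⟩ := (InvImage.wf (T.dist v) wellFounded_lt).has_min Y hne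
  refine ⟨a, ha, fun y hy => hT.mem_interval_of_inter fun x hx hx' => ?_⟩
  have := hmin x (hT.isConvex_iff.1 hY a ha y hy hx')
  simp only [InvImage, mem_interval] at this hx
  exact hT.connected.dist_eq_zero_iff.1 (by omega)

theorem isGate_image (hT : T.IsTree) {θ : Equiv.Perm V} (hθ : IsTreeAut T θ)
    (ha : T.IsGate Y v a) : T.IsGate (θ '' Y) (θ v) (θ a) := by
  refine ⟨Set.mem_image_of_mem θ ha.1, ?_⟩
  rintro _ ⟨y, hy, rfl⟩
  exact (hT.map_mem_interval_iff hθ).2 (ha.2 y hy)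

theorem isGate_eq_of_disjoint (hT : T.IsTree) (hZ : IsConvex T Z) (hYZ : Disjoint Y Z)
    {z' a' : V} (hz : z ∈ Z) (hz' : z' ∈ Z) (ha : T.IsGate Y z a) (ha' : T.IsGate Y z' a') :
    a' = a := by
  rcases hT.interval_subset_union z' a z (ha'.2 a ha.1) with h | h
  · exact absurd (hT.isConvex_iff.1 hZ z' hz' z hz h) (hYZ.notMem_of_mem_left ha'.1)
  · exact ha.eq_of_mem_interval hT.connected ha'.1 h

end IsTree

end SimpleGraph

section Convex

variable {V : Type*} {T : SimpleGraph V} {Y Z : Set V}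

theorem IsConvex.inter (hY : IsConvex T Y) (hZ : IsConvex T Z) : IsConvex T (Y ∩ Z) :=
  fun u hu v hv p hp w hw => ⟨hY u hu.1 v hv.1 p hp w hw, hZ u hu.2 v hv.2 p hp w hw⟩

theorem isConvex_iInter₂ {ι : Sort*} {κ : ι → Sort*} {Y : ∀ i, κ i → Set V}
    (h : ∀ i j, IsConvex T (Y i j)) : IsConvex T (⋂ i, ⋂ j, Y i j) :=
  fun u hu v hv p hp w hw => Set.mem_iInter₂.2 fun i j =>
    h i j u (Set.mem_iInter₂.1 hu i j) v (Set.mem_iInter₂.1 hv i j) p hp w hw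

namespace SimpleGraph.IsTree

theorem inter_inter_nonempty (hT : T.IsTree) {Y₁ Y₂ Y₃ : Set V} (h₁ : IsConvex T Y₁)
    (h₂ : IsConvex T Y₂) (h₃ : IsConvex T Y₃) (h₁₂ : (Y₁ ∩ Y₂).Nonempty)
    (h₁₃ : (Y₁ ∩ Y₃).Nonempty) (h₂₃ : (Y₂ ∩ Y₃).Nonempty) : (Y₁ ∩ Y₂ ∩ Y₃).Nonempty := by
  obtain ⟨p, hp₁, hp₂⟩ := h₁₂
  obtain ⟨q, hq₁, hq₃⟩ := h₁₃
  obtain ⟨z, hz₂, hz₃⟩ := h₂₃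
  -- the median of `p`, `q`, `z`
  obtain ⟨m, hm, hmz⟩ := hT.exists_isGate (hT.isConvex_interval p q) ⟨p, left_mem_interval⟩ z
  exact ⟨m, ⟨hT.isConvex_iff.1 h₁ p hp₁ q hq₁ hm, hT.isConvex_iff.1 h₂ z hz₂ p hp₂
    (hmz p left_mem_interval)⟩, hT.isConvex_iff.1 h₃ z hz₃ q hq₃ (hmz q right_mem_interval)⟩

theorem biInter_nonempty (hT : T.IsTree) {ι : Type*} (s : Finset ι) {Y : ι → Set V}
    (hY : ∀ i ∈ s, IsConvex T (Y i)) (h : ∀ i ∈ s, ∀ j ∈ s, (Y i ∩ Y j).Nonempty) :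
    (⋂ i ∈ s, Y i).Nonempty := by
  classical
  suffices ∀ Z : Set V, IsConvex T Z → Z.Nonempty → (∀ i ∈ s, (Y i ∩ Z).Nonempty) →
      (Z ∩ ⋂ i ∈ s, Y i).Nonempty by
    have _ := hT.connected.nonempty
    simpa using this Set.univ (fun _ _ _ _ _ _ _ _ => trivial) Set.univ_nonempty
      fun i hi => by simpa using h i hi i hi
  induction s using Finset.induction_on with
  | empty => intro Z _ hZ _; simpa using hZ
  | insert j s _ ih =>
    intro Z hZ _ hYZ
    have hs : ∀ i ∈ s, i ∈ insert j s := fun i hi => Finset.mem_insert_of_mem hi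
    have hj := Finset.mem_insert_self j s
    have hZj : (Y j ∩ Z).Nonempty := hYZ j hj
    obtain ⟨x, ⟨hxZ, hxj⟩, hx⟩ := ih (fun i hi => hY i (hs i hi))
      (fun i hi k hk => h i (hs i hi) k (hs k hk)) (Z ∩ Y j) (hZ.inter (hY j hj))
      (by rwa [Set.inter_comm]) fun i hi => by
        simpa [Set.inter_assoc] using hT.inter_inter_nonempty (hY i (hs i hi)) hZ (hY j hj)
          (hYZ i (hs i hi)) (h i (hs i hi) j hj) (by rwa [Set.inter_comm])
    exact ⟨x, hxZ, by simpa [Finset.set_biInter_insert] using ⟨hxj, by simpa using hx⟩⟩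

end SimpleGraph.IsTree

end Convex

section Rays

variable {V : Type*} {T : SimpleGraph V} {r s : ℕ → V} {x : V}

theorem RayEquiv.symm (h : RayEquiv r s) : RayEquiv s r :=
  let ⟨m, n, h⟩ := h; ⟨n, m, fun i => (h i).symm⟩

theorem RayEquiv.trans {t : ℕ → V} (h₁ : RayEquiv r s) (h₂ : RayEquiv s t) : RayEquiv r t := by
  obtain ⟨m, n, h₁⟩ := h₁
  obtain ⟨n', k, h₂⟩ := h₂
  refine ⟨m + n', k + n, fun i => ?_⟩
  rw [Nat.add_assoc, h₁, ← Nat.add_assoc, Nat.add_comm n n', Nat.add_assoc, h₂ (n + i),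
    Nat.add_assoc]

theorem RayEquiv.map (h : RayEquiv r s) (f : V → V) :
    RayEquiv (fun n => f (r n)) (fun n => f (s n)) :=
  let ⟨m, n, h⟩ := h; ⟨m, n, fun i => congrArg f (h i)⟩

theorem rayEquiv_shift (r : ℕ → V) (a : ℕ) : RayEquiv (fun n => r (a + n)) r :=
  ⟨0, a, fun i => by simp⟩

theorem IsRay.shift (hr : IsRay T r) (a : ℕ) : IsRay T (fun n => r (a + n)) :=
  ⟨fun n => hr.1 (a + n), fun i j h => by have := hr.2 h; omega⟩

theorem IsRay.map (hr : IsRay T r) {θ : Equiv.Perm V} (hθ : IsTreeAut T θ) :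
    IsRay T (fun n => θ (r n)) :=
  ⟨fun n => (hθ _ _).2 (hr.1 n), θ.injective.comp hr.2⟩

def rayWalk (r : ℕ → V) (hadj : ∀ n, T.Adj (r n) (r (n + 1))) (a : ℕ) :
    (t : ℕ) → T.Walk (r a) (r (a + t))
  | 0 => Walk.nil
  | t + 1 => (rayWalk r hadj a t).concat (hadj (a + t))

theorem mem_support_rayWalk_iff (hadj : ∀ n, T.Adj (r n) (r (n + 1))) (a t : ℕ) :
    x ∈ (rayWalk r hadj a t).support ↔ ∃ k ≤ t, r (a + k) = x := by
  induction t with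
  | zero => simp [rayWalk, eq_comm]
  | succ t ih =>
    rw [rayWalk, Walk.support_concat, List.mem_append, List.mem_singleton, ih]
    constructor
    · rintro (⟨k, hk, rfl⟩ | rfl)
      exacts [⟨k, by omega, rfl⟩, ⟨t + 1, le_rfl, rfl⟩]
    · rintro ⟨k, hk, rfl⟩
      rcases Nat.lt_or_ge k (t + 1) with h | h
      exacts [.inl ⟨k, by omega, rfl⟩, .inr (by rw [show k = t + 1 by omega])]

theorem length_rayWalk (hadj : ∀ n, T.Adj (r n) (r (n + 1))) (a t : ℕ) :
    (rayWalk r hadj a t).length = t := by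
  induction t with
  | zero => rfl
  | succ t ih => rw [rayWalk, Walk.length_concat, ih]

namespace IsRay

theorem isPath_rayWalk (hr : IsRay T r) (a t : ℕ) : (rayWalk r hr.1 a t).IsPath := by
  induction t with
  | zero => exact Walk.IsPath.nil
  | succ t ih =>
    refine ih.concat (fun h => ?_) _
    obtain ⟨k, hk, hkt⟩ := (mem_support_rayWalk_iff hr.1 a t).1 h
    have := hr.2 hkt
    omega

theorem dist_apply_add (hT : T.IsTree) (hr : IsRay T r) (a t : ℕ) :
    T.dist (r a) (r (a + t)) = t := by
  rw [hT.dist_eq_length (hr.isPath_rayWalk a t), length_rayWalk]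

theorem dist_apply (hT : T.IsTree) (hr : IsRay T r) (i j : ℕ) :
    T.dist (r i) (r j) = Nat.dist i j := by
  rcases le_total i j with h | h
  · obtain ⟨t, rfl⟩ := Nat.exists_eq_add_of_le h
    rw [hr.dist_apply_add hT]; unfold Nat.dist; omega
  · obtain ⟨t, rfl⟩ := Nat.exists_eq_add_of_le h
    rw [dist_comm, hr.dist_apply_add hT]; unfold Nat.dist; omega

theorem mem_interval_iff (hT : T.IsTree) (hr : IsRay T r) (a t : ℕ) :
    x ∈ T.interval (r a) (r (a + t)) ↔ ∃ k ≤ t, r (a + k) = x := by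
  rw [← hT.mem_support_iff_mem_interval (hr.isPath_rayWalk a t), mem_support_rayWalk_iff]

theorem isConvex_range (hT : T.IsTree) (hr : IsRay T r) : IsConvex T (Set.range r) := by
  have key : ∀ i j, i ≤ j → T.interval (r i) (r j) ⊆ Set.range r := by
    intro i j hij x hx
    obtain ⟨t, rfl⟩ := Nat.exists_eq_add_of_le hij
    obtain ⟨k, -, rfl⟩ := (hr.mem_interval_iff hT i t).1 hx
    exact ⟨i + k, rfl⟩
  refine hT.isConvex_iff.2 ?_
  rintro _ ⟨i, rfl⟩ _ ⟨j, rfl⟩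
  rcases le_total i j with h | h
  · exact key i j h
  · rw [interval_comm]; exact key j i h

/-- Once `s` is known to pass through `r a₀` and, much later, through `r b`, comparing distances
from `r a₀` forces `s` to run along `r` in between. -/
theorem rayEquiv_of_frequently_mem_range (hT : T.IsTree) (hr : IsRay T r) (hs : IsRay T s)
    (h : ∃ᶠ j in atTop, s j ∈ Set.range r) : RayEquiv s r := by
  rw [frequently_atTop] at h
  obtain ⟨j₀, -, a₀, ha₀⟩ := h 0
  refine ⟨j₀, a₀, fun m => ?_⟩
  obtain ⟨j, hj, b, hb⟩ := h (j₀ + m + a₀ + 1)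
  obtain ⟨t, rfl⟩ := Nat.exists_eq_add_of_le (show j₀ ≤ j by omega)
  have hdist := hr.dist_apply hT a₀ b
  rw [ha₀, hb, hs.dist_apply_add hT] at hdist
  obtain rfl : b = a₀ + t := by unfold Nat.dist at hdist; omega
  have hm : s (j₀ + m) ∈ T.interval (r a₀) (r (a₀ + t)) := by
    rw [ha₀, hb]; exact (hs.mem_interval_iff hT j₀ t).2 ⟨m, by omega, rfl⟩
  obtain ⟨k, -, hk⟩ := (hr.mem_interval_iff hT a₀ t).1 hm
  have hkm := hr.dist_apply_add hT a₀ k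
  rw [hk, ha₀, hs.dist_apply_add hT] at hkm
  rw [← hk, hkm]

end IsRay

namespace SimpleGraph.IsTree

theorem exists_isRay_of_mem_interval (hT : T.IsTree) (v : V) {x : ℕ → V}
    (hx : ∀ k, x k ∈ T.interval v (x (k + 1))) (hk : ∀ k, k ≤ T.dist v (x k)) :
    ∃ r, IsRay T r ∧ r 0 = v ∧ ∀ k, r k ∈ T.interval v (x k) ∧ T.dist v (r k) = k := by
  choose r hr using fun k => hT.exists_mem_interval_dist_eq v (x k) (hk k)
  have hnext : ∀ k, r k ∈ T.interval v (r (k + 1)) := fun k =>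
    hT.mem_interval_of_dist_le (hT.connected.interval_subset_interval_left (hx k) (hr k).1)
      (hr (k + 1)).1 (by rw [(hr k).2, (hr (k + 1)).2]; omega)
  refine ⟨r, ⟨fun k => ?_, fun i j hij => ?_⟩, ?_, hr⟩
  · have := hnext k
    rw [mem_interval, (hr k).2, (hr (k + 1)).2] at this
    exact dist_eq_one_iff_adj.1 (by omega)
  · rw [← (hr i).2, ← (hr j).2, hij]
  · exact (hT.connected.dist_eq_zero_iff.1 (hr 0).2).symm

theorem exists_isRay_rayEquiv (hT : T.IsTree) (hs : IsRay T s) (v : V) :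
    ∃ r, IsRay T r ∧ r 0 = v ∧ RayEquiv r s := by
  obtain ⟨_, ⟨f, rfl⟩, hf⟩ := hT.exists_isGate (hs.isConvex_range hT) ⟨s 0, 0, rfl⟩ v
  have hgate : ∀ k, s f ∈ T.interval v (s (f + k)) := fun k => hf _ ⟨f + k, rfl⟩
  have hseg : ∀ k, s (f + k) ∈ T.interval (s f) (s (f + (k + 1))) := fun k =>
    (hs.mem_interval_iff hT f (k + 1)).2 ⟨k, by omega, rfl⟩
  obtain ⟨r, hr, hr0, hrk⟩ := hT.exists_isRay_of_mem_interval v (x := fun k => s (f + k))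
    (fun k => hT.connected.interval_subset_interval_right (hgate (k + 1)) (hseg k))
    (fun k => by have := hgate k; rw [mem_interval, hs.dist_apply_add hT] at this; omega)
  refine ⟨r, hr, hr0, IsRay.rayEquiv_of_frequently_mem_range hT hs hr ?_⟩
  refine frequently_atTop.2 fun J => ⟨J + T.dist v (s f), by omega, ?_⟩
  obtain ⟨hrJ, hdJ⟩ := hrk (J + T.dist v (s f))
  have := hT.mem_interval_right_of_dist_le (hgate _) hrJ (by omega)
  obtain ⟨k, -, hk⟩ := (hs.mem_interval_iff hT f _).1 this
  exact ⟨f + k, hk⟩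

end SimpleGraph.IsTree

end Rays

section Lines

variable {V : Type*} {T : SimpleGraph V} {r s : ℕ → V} {ℓ : ℤ → V} {x : V}

def IsLine (T : SimpleGraph V) (ℓ : ℤ → V) : Prop :=
  (∀ k, T.Adj (ℓ k) (ℓ (k + 1))) ∧ Function.Injective ℓ

namespace IsLine

theorem isRay (hℓ : IsLine T ℓ) (a : ℤ) : IsRay T (fun n : ℕ => ℓ (a + n)) :=
  ⟨fun n => by simpa [add_assoc] using hℓ.1 (a + n), fun i j h => by have := hℓ.2 h; omega⟩

theorem dist_apply (hT : T.IsTree) (hℓ : IsLine T ℓ) (a b : ℤ) :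
    T.dist (ℓ a) (ℓ b) = (a - b).natAbs := by
  have key : ∀ a b, a ≤ b → T.dist (ℓ a) (ℓ b) = (a - b).natAbs := by
    intro a b hab
    have := (hℓ.isRay a).dist_apply_add hT 0 (b - a).toNat
    simp only [Nat.cast_zero, add_zero, zero_add] at this
    rwa [show a + ((b - a).toNat : ℤ) = b by omega, show (b - a).toNat = (a - b).natAbs by omega]
      at this
  rcases le_total a b with h | h
  · exact key a b h
  · rw [dist_comm, key b a h]; omega

theorem mem_interval_iff (hT : T.IsTree) (hℓ : IsLine T ℓ) {a b : ℤ} (hab : a ≤ b) :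
    x ∈ T.interval (ℓ a) (ℓ b) ↔ ∃ c, a ≤ c ∧ c ≤ b ∧ ℓ c = x := by
  have := (hℓ.isRay a).mem_interval_iff hT 0 (b - a).toNat (x := x)
  simp only [Nat.cast_zero, add_zero, zero_add] at this
  rw [show a + ((b - a).toNat : ℤ) = b by omega] at this
  rw [this]
  constructor
  · rintro ⟨k, hk, rfl⟩; exact ⟨a + k, by omega, by omega, rfl⟩
  · rintro ⟨c, h₁, h₂, rfl⟩; exact ⟨(c - a).toNat, by omega, by congr 1; omega⟩

theorem isConvex_range (hT : T.IsTree) (hℓ : IsLine T ℓ) : IsConvex T (Set.range ℓ) := by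
  have key : ∀ a b, a ≤ b → T.interval (ℓ a) (ℓ b) ⊆ Set.range ℓ := fun a b hab x hx =>
    let ⟨c, _, _, hc⟩ := (hℓ.mem_interval_iff hT hab).1 hx; ⟨c, hc⟩
  refine hT.isConvex_iff.2 ?_
  rintro _ ⟨a, rfl⟩ _ ⟨b, rfl⟩
  rcases le_total a b with h | h
  · exact key a b h
  · rw [interval_comm]; exact key b a h

theorem ncard_neighborSet (hT : T.IsTree) (hℓ : IsLine T ℓ) (hsurj : Function.Surjective ℓ)
    (v : V) : (T.neighborSet v).ncard = 2 := by
  obtain ⟨a, rfl⟩ := hsurj v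
  have : T.neighborSet (ℓ a) = {ℓ (a - 1), ℓ (a + 1)} := by
    ext u
    obtain ⟨b, rfl⟩ := hsurj u
    rw [mem_neighborSet, ← dist_eq_one_iff_adj, hℓ.dist_apply hT, Set.mem_insert_iff,
      Set.mem_singleton_iff, hℓ.2.eq_iff, hℓ.2.eq_iff]
    omega
  rw [this, Set.ncard_pair (hℓ.2.ne (by omega))]

theorem apply_mem_range (hT : T.IsTree) (hℓ : IsLine T ℓ) {θ : Equiv.Perm V}
    (hθ : IsTreeAut T θ) (hpos : RayEquiv (fun n : ℕ => θ (ℓ n)) (fun n : ℕ => ℓ n))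
    (hneg : RayEquiv (fun n : ℕ => θ (ℓ (-n))) (fun n : ℕ => ℓ (-n))) (a : ℤ) :
    θ (ℓ a) ∈ Set.range ℓ := by
  obtain ⟨m, n, hpos⟩ := hpos
  obtain ⟨m', n', hneg⟩ := hneg
  have ha : ℓ a ∈ T.interval (ℓ (-(m' + a.natAbs : ℕ))) (ℓ (m + a.natAbs : ℕ)) :=
    (hℓ.mem_interval_iff hT (by omega)).2 ⟨a, by omega, by omega, rfl⟩
  have hp : θ (ℓ (m + a.natAbs : ℕ)) = ℓ (n + a.natAbs : ℕ) := hpos _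
  have hn : θ (ℓ (-(m' + a.natAbs : ℕ))) = ℓ (-(n' + a.natAbs : ℕ)) := hneg _
  rw [← hT.map_mem_interval_iff hθ, hp, hn] at ha
  obtain ⟨c, -, -, hc⟩ := (hℓ.mem_interval_iff hT (by omega)).1 ha
  exact ⟨c, hc⟩

end IsLine

theorem isLine_glue (hr : IsRay T r) (hs : IsRay T s) (h₀ : r 0 = s 0)
    (hrs : ∀ i j, r (i + 1) ≠ s (j + 1)) :
    IsLine T (fun k : ℤ => if 0 ≤ k then r k.toNat else s (-k).toNat) := by
  have hrs' : ∀ i j, r i = s j → i = 0 ∧ j = 0 := by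
    intro i j h
    rcases i with _ | i <;> rcases j with _ | j
    · exact ⟨rfl, rfl⟩
    · exact absurd (hs.2 (h₀ ▸ h)) (by omega)
    · exact absurd (hr.2 (h₀ ▸ h)) (by omega)
    · exact absurd h (hrs i j)
  refine ⟨fun k => ?_, fun a b hab => ?_⟩
  · rcases lt_trichotomy k (-1) with h | rfl | h
    · simp only [show ¬ 0 ≤ k by omega, show ¬ 0 ≤ k + 1 by omega, if_false]
      have := hs.1 (-(k + 1)).toNat
      rwa [show (-(k + 1)).toNat + 1 = (-k).toNat by omega, T.adj_comm] at this
    · simpa [h₀] using (hs.1 0).symm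
    · simp only [show 0 ≤ k by omega, show 0 ≤ k + 1 by omega, if_true]
      have := hr.1 k.toNat
      rwa [show k.toNat + 1 = (k + 1).toNat by omega] at this
  · simp only at hab
    split_ifs at hab with ha hb hb
    · have := hr.2 hab; omega
    · have := hrs' _ _ hab; omega
    · have := hrs' _ _ hab.symm; omega
    · have := hs.2 hab; omega

namespace SimpleGraph.IsTree

theorem exists_isLine (hT : T.IsTree) (hr : IsRay T r) (hs : IsRay T s) (hrs : ¬ RayEquiv r s) :
    ∃ ℓ, IsLine T ℓ ∧ RayEquiv (fun n : ℕ => ℓ n) r ∧ RayEquiv (fun n : ℕ => ℓ (-n)) s := by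
  classical
  -- `s'` starts at `r 0`; past their last common index `k₀`, `r` and `s'` are disjoint.
  obtain ⟨s', hs', hs'0, hs's⟩ := hT.exists_isRay_rayEquiv hs (r 0)
  obtain ⟨K, hK⟩ : ∃ K, ∀ k, K ≤ k → r k ≠ s' k := by
    by_contra! h
    exact hrs ((IsRay.rayEquiv_of_frequently_mem_range hT hs' hr <| frequently_atTop.2 fun J =>
      let ⟨k, hk, he⟩ := h J; ⟨k, hk, k, he.symm⟩).trans hs's)
  set k₀ := Nat.findGreatest (fun k => r k = s' k) K
  have hk₀ : r k₀ = s' k₀ := Nat.findGreatest_spec (P := fun k => r k = s' k) K.zero_le hs'0.symm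
  have hgt : ∀ k, k₀ < k → r k ≠ s' k := fun k hk =>
    if h : k ≤ K then Nat.findGreatest_is_greatest hk h else hK k (by omega)
  refine ⟨_, isLine_glue (hr.shift k₀) (hs'.shift k₀) hk₀ fun i j hij => ?_, ?_, ?_⟩
  · have hi := hr.dist_apply_add hT 0 (k₀ + (i + 1))
    have hj := hs'.dist_apply_add hT 0 (k₀ + (j + 1))
    rw [zero_add] at hi hj
    rw [hij, ← hs'0, hj] at hi
    obtain rfl : i = j := by omega
    exact hgt _ (by omega) hij
  · convert rayEquiv_shift r k₀ using 1
    funext n; simp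
  · convert (rayEquiv_shift s' k₀).trans hs's using 1
    funext n
    rcases n with _ | n
    · simpa using hk₀
    · simp only [Left.nonneg_neg_iff]
      rw [if_neg (by omega), neg_neg, Int.toNat_natCast]

theorem exists_forall_mem_of_not_rayEquiv (hT : T.IsTree) (hr : IsRay T r) (hs : IsRay T s)
    (hrs : ¬ RayEquiv r s) : ∃ x, ∀ Y, IsConvex T Y → (∀ᶠ k in atTop, r k ∈ Y) →
      (∀ᶠ k in atTop, s k ∈ Y) → x ∈ Y := by
  obtain ⟨ℓ, hℓ, ⟨m, n, hpos⟩, ⟨m', n', hneg⟩⟩ := hT.exists_isLine hr hs hrs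
  refine ⟨ℓ 0, fun Y hY hrY hsY => ?_⟩
  obtain ⟨K, hK⟩ := eventually_atTop.1 hrY
  obtain ⟨K', hK'⟩ := eventually_atTop.1 hsY
  have h₁ : ℓ (m + K : ℕ) ∈ Y := by
    have : ℓ (m + K : ℕ) = r (n + K) := hpos K
    rw [this]; exact hK _ (by omega)
  have h₂ : ℓ (-(m' + K' : ℕ)) ∈ Y := by
    have : ℓ (-(m' + K' : ℕ)) = s (n' + K') := hneg K'
    rw [this]; exact hK' _ (by omega)
  exact hT.isConvex_iff.1 hY _ h₂ _ h₁
    ((hℓ.mem_interval_iff hT (by omega)).2 ⟨0, by omega, by omega, rfl⟩)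

theorem exists_isRay_eventually_mem (hT : T.IsTree) {𝒞 : Set (Set V)}
    (hconv : ∀ W ∈ 𝒞, IsConvex T W) (hne : ∀ W ∈ 𝒞, W.Nonempty)
    (hinter : ∀ W ∈ 𝒞, ∀ W' ∈ 𝒞, W ∩ W' ∈ 𝒞) (hempty : ∀ x, ∃ W ∈ 𝒞, x ∉ W)
    {W₀ : Set V} (hW₀ : W₀ ∈ 𝒞) : ∃ r, IsRay T r ∧ ∀ W ∈ 𝒞, ∀ᶠ k in atTop, r k ∈ W := by
  obtain ⟨v, -⟩ := hne W₀ hW₀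
  have : Nonempty V := ⟨v⟩
  choose! g hg using fun W (hW : W ∈ 𝒞) => hT.exists_isGate (hconv W hW) (hne W hW) v
  have hsub : ∀ W ∈ 𝒞, ∀ W' ∈ 𝒞, W' ⊆ W → g W ∈ T.interval v (g W') :=
    fun W hW W' hW' h => (hg W hW).2 _ (h (hg W' hW').1)
  have hstep : ∀ W ∈ 𝒞, ∃ W' ∈ 𝒞, W' ⊆ W ∧ T.dist v (g W) < T.dist v (g W') := by
    intro W hW
    obtain ⟨W', hW', hgW⟩ := hempty (g W)
    have hU := hinter W hW W' hW'
    refine ⟨W ∩ W', hU, Set.inter_subset_left, ?_⟩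
    have h := hsub W hW _ hU Set.inter_subset_left
    have hne : T.dist (g W) (g (W ∩ W')) ≠ 0 := fun h0 =>
      hgW ((hT.connected.dist_eq_zero_iff.1 h0) ▸ (hg _ hU).1.2)
    rw [mem_interval] at h; omega
  choose! next hnext using hstep
  have hW : ∀ k, next^[k] W₀ ∈ 𝒞 ∧ k ≤ T.dist v (g (next^[k] W₀)) := by
    intro k
    induction k with
    | zero => exact ⟨hW₀, Nat.zero_le _⟩
    | succ k ih =>
      rw [Function.iterate_succ_apply']
      exact ⟨(hnext _ ih.1).1, by have := (hnext _ ih.1).2.2; omega⟩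
  obtain ⟨r, hr, -, hrk⟩ := hT.exists_isRay_of_mem_interval v (x := fun k => g (next^[k] W₀))
    (fun k => by
      rw [Function.iterate_succ_apply']
      exact hsub _ (hW k).1 _ (hnext _ (hW k).1).1 (hnext _ (hW k).1).2.1)
    (fun k => (hW k).2)
  refine ⟨r, hr, fun W hW' => eventually_atTop.2 ⟨T.dist v (g W), fun k hk => ?_⟩⟩
  have hU := hinter W hW' _ (hW k).1
  have h₁ := hsub W hW' _ hU Set.inter_subset_left
  have h₂ := hT.connected.interval_subset_interval_left
    (hsub _ (hW k).1 _ hU Set.inter_subset_right) (hrk k).1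
  have := hT.mem_interval_right_of_dist_le h₁ h₂ (by rw [(hrk k).2]; exact hk)
  exact hT.isConvex_iff.1 (hconv W hW') _ (hg W hW').1 _ (hg _ hU).1.1 this

end SimpleGraph.IsTree

end Lines

section Actions

variable {V : Type*} {T : SimpleGraph V} {G N : Subgroup (Equiv.Perm V)} {Y Z : Set V}

def FixesEnd (T : SimpleGraph V) (S : Set (Equiv.Perm V)) : Prop :=
  ∃ r : ℕ → V, IsRay T r ∧ ∀ g ∈ S, RayEquiv (fun n => g (r n)) r

def StabilizesProperSubtree (T : SimpleGraph V) (S : Set (Equiv.Perm V)) : Prop :=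
  ∃ Y : Set V, Y.Nonempty ∧ IsConvex T Y ∧ Y ≠ Set.univ ∧ ∀ g ∈ S, ∀ v ∈ Y, g v ∈ Y

namespace SimpleGraph.IsTree

theorem fixesEnd_of_forall_preimage_mem (hT : T.IsTree) {S : Set (Equiv.Perm V)}
    (hS : ∀ g ∈ S, IsTreeAut T g) {𝒞 : Set (Set V)} (hconv : ∀ W ∈ 𝒞, IsConvex T W)
    (hne : ∀ W ∈ 𝒞, W.Nonempty) (hinter : ∀ W ∈ 𝒞, ∀ W' ∈ 𝒞, W ∩ W' ∈ 𝒞)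
    (hempty : ∀ x, ∃ W ∈ 𝒞, x ∉ W) {W₀ : Set V} (hW₀ : W₀ ∈ 𝒞)
    (hS𝒞 : ∀ g ∈ S, ∀ W ∈ 𝒞, ⇑g ⁻¹' W ∈ 𝒞) : FixesEnd T S := by
  obtain ⟨r, hr, hrW⟩ := hT.exists_isRay_eventually_mem hconv hne hinter hempty hW₀
  refine ⟨r, hr, fun g hg => by_contra fun hgr => ?_⟩
  obtain ⟨x, hx⟩ := hT.exists_forall_mem_of_not_rayEquiv (hr.map (hS g hg)) hr hgr
  obtain ⟨W, hW, hxW⟩ := hempty x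
  exact hxW (hx W (hconv W hW) (hrW _ (hS𝒞 g hg W hW)) (hrW W hW))

end SimpleGraph.IsTree

theorem image_eq_of_invariant (hY : ∀ n ∈ N, ∀ v ∈ Y, n v ∈ Y) {n : Equiv.Perm V}
    (hn : n ∈ N) : ⇑n '' Y = Y :=
  (Set.image_subset_iff.2 fun v hv => hY n hn v hv).antisymm fun v hv =>
    ⟨n⁻¹ v, hY _ (inv_mem hn) v hv, by simp⟩

theorem inv_mul_mul_mem_of_normalizes (hnorm : ∀ g ∈ G, ∀ n ∈ N, g * n * g⁻¹ ∈ N)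
    {g n : Equiv.Perm V} (hg : g ∈ G) (hn : n ∈ N) : g⁻¹ * n * g ∈ N := by
  simpa using hnorm g⁻¹ (inv_mem hg) n hn

theorem preimage_invariant_of_normalizes (hnorm : ∀ g ∈ G, ∀ n ∈ N, g * n * g⁻¹ ∈ N)
    (hY : ∀ n ∈ N, ∀ v ∈ Y, n v ∈ Y) {g : Equiv.Perm V} (hg : g ∈ G) :
    ∀ n ∈ N, ∀ v ∈ ⇑g ⁻¹' Y, n v ∈ ⇑g ⁻¹' Y := fun n hn v hv => by
  simpa [Equiv.Perm.mul_apply] using hY _ (hnorm g hg n hn) (g v) hv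

namespace SimpleGraph.IsTree

theorem exists_apply_ne (hT : T.IsTree) (hG : ¬ StabilizesProperSubtree T G)
    (hN : ∀ n ∈ N, IsTreeAut T n) (hNnt : N ≠ ⊥) (hnorm : ∀ g ∈ G, ∀ n ∈ N, g * n * g⁻¹ ∈ N)
    (v : V) : ∃ n ∈ N, n v ≠ v := by
  by_contra! hv
  refine hG ⟨{x | ∀ n ∈ N, n x = x}, ⟨v, hv⟩, hT.isConvex_iff.2 ?_, fun hU => hNnt ?_, ?_⟩
  · intro x hx y hy w hw n hn
    have h := (hT.map_mem_interval_iff (hN n hn)).2 hw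
    rw [hx n hn, hy n hn] at h
    refine hT.eq_of_mem_interval h hw ?_
    have := hT.dist_map (hN n hn) x w
    rwa [hx n hn] at this
  · refine (Subgroup.eq_bot_iff_forall N).2 fun n hn => Equiv.ext fun x => ?_
    exact (hU ▸ Set.mem_univ x : x ∈ {x | ∀ n ∈ N, n x = x}) n hn
  · intro g hg x hx n hn
    simpa only [Equiv.Perm.mul_apply, Equiv.Perm.coe_inv, Equiv.apply_symm_apply] using
      congrArg g (hx _ (inv_mul_mul_mem_of_normalizes hnorm hg hn))

theorem inter_nonempty_of_invariant (hT : T.IsTree) (hN : ∀ n ∈ N, IsTreeAut T n)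
    (hfree : ∀ v, ∃ n ∈ N, n v ≠ v) (hY : IsConvex T Y) (hYne : Y.Nonempty)
    (hNY : ∀ n ∈ N, ∀ v ∈ Y, n v ∈ Y) (hZ : IsConvex T Z) (hZne : Z.Nonempty)
    (hNZ : ∀ n ∈ N, ∀ v ∈ Z, n v ∈ Z) : (Y ∩ Z).Nonempty := by
  by_contra hYZ
  rw [Set.not_nonempty_iff_eq_empty, ← Set.disjoint_iff_inter_eq_empty] at hYZ
  obtain ⟨z, hz⟩ := hZne
  obtain ⟨a, ha⟩ := hT.exists_isGate hY hYne z
  obtain ⟨n, hn, hna⟩ := hfree a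
  have := hT.isGate_image (hN n hn) ha
  rw [image_eq_of_invariant hNY hn] at this
  exact hna (hT.isGate_eq_of_disjoint hZ hYZ hz (hNZ n hn z hz) ha this)

theorem fixesEnd_of_pairwise_inter_nonempty (hT : T.IsTree) (hG : ∀ g ∈ G, IsTreeAut T g)
    (hY : IsConvex T Y) (hmeet : ∀ g ∈ G, ∀ g' ∈ G, (⇑g ⁻¹' Y ∩ ⇑g' ⁻¹' Y).Nonempty)
    (hempty : ∀ x, ∃ g ∈ G, g x ∉ Y) : FixesEnd T G := by
  classical
  refine hT.fixesEnd_of_forall_preimage_mem hG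
    (𝒞 := {W | ∃ s : Finset (Equiv.Perm V), ↑s ⊆ (G : Set (Equiv.Perm V)) ∧
      W = ⋂ g ∈ s, ⇑g ⁻¹' Y}) ?_ ?_ ?_ ?_ ⟨∅, by simp, rfl⟩ ?_
  · rintro _ ⟨s, hs, rfl⟩
    exact isConvex_iInter₂ fun g hg => hT.isConvex_preimage (hG g (hs hg)) hY
  · rintro _ ⟨s, hs, rfl⟩
    exact hT.biInter_nonempty s (fun g hg => hT.isConvex_preimage (hG g (hs hg)) hY)
      fun g hg g' hg' => hmeet g (hs hg) g' (hs hg')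
  · rintro _ ⟨s, hs, rfl⟩ _ ⟨s', hs', rfl⟩
    refine ⟨s ∪ s', by simp [hs, hs'], ?_⟩
    ext x; simp [or_imp, forall_and]
  · intro x
    obtain ⟨g, hg, hgx⟩ := hempty x
    exact ⟨_, ⟨{g}, by simpa using hg, rfl⟩, by simpa using hgx⟩
  · rintro g hg _ ⟨s, hs, rfl⟩
    refine ⟨s.image (· * g), ?_, ?_⟩
    · intro x hx
      obtain ⟨h, hh, rfl⟩ := Finset.mem_image.1 hx
      exact mul_mem (hs hh) hg
    · rw [Finset.set_biInter_finset_image, Set.preimage_iInter₂]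
      rfl

theorem not_stabilizesProperSubtree (hT : T.IsTree) (hG : ∀ g ∈ G, IsTreeAut T g)
    (hgd : GeomDense T (G : Set (Equiv.Perm V))) (hN : ∀ n ∈ N, IsTreeAut T n) (hNnt : N ≠ ⊥)
    (hnorm : ∀ g ∈ G, ∀ n ∈ N, g * n * g⁻¹ ∈ N) :
    ¬ StabilizesProperSubtree T (N : Set (Equiv.Perm V)) := by
  rintro ⟨Y, hYne, hY, hYU, hNY⟩
  have hfree := hT.exists_apply_ne hgd.2 hN hNnt hnorm
  by_cases hC : (⋂ g ∈ G, ⇑g ⁻¹' Y).Nonempty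
  · refine hgd.2 ⟨_, hC, isConvex_iInter₂ fun g hg => hT.isConvex_preimage (hG g hg) hY,
      fun hU => hYU (Set.eq_univ_of_forall fun x => ?_), fun g hg x hx => ?_⟩
    · exact Set.mem_iInter₂.1 (hU ▸ Set.mem_univ x) 1 G.one_mem
    · exact Set.mem_iInter₂.2 fun g' hg' => Set.mem_iInter₂.1 hx (g' * g) (mul_mem hg' hg)
  · refine hgd.1 (hT.fixesEnd_of_pairwise_inter_nonempty hG hY (fun g hg g' hg' => ?_)
      fun x => by by_contra! h; exact hC ⟨x, Set.mem_iInter₂.2 h⟩)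
    exact hT.inter_nonempty_of_invariant hN hfree (hT.isConvex_preimage (hG g hg) hY)
      (hYne.preimage g.surjective) (preimage_invariant_of_normalizes hnorm hNY hg)
      (hT.isConvex_preimage (hG g' hg') hY) (hYne.preimage g'.surjective)
      (preimage_invariant_of_normalizes hnorm hNY hg')

theorem not_fixesEnd (hT : T.IsTree) (hline : NotLine T) (hG : ∀ g ∈ G, IsTreeAut T g)
    (hgd : GeomDense T (G : Set (Equiv.Perm V))) (hN : ∀ n ∈ N, IsTreeAut T n) (hNnt : N ≠ ⊥)
    (hnorm : ∀ g ∈ G, ∀ n ∈ N, g * n * g⁻¹ ∈ N) : ¬ FixesEnd T (N : Set (Equiv.Perm V)) := by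
  rintro ⟨r, hr, hNr⟩
  obtain ⟨h, hh, hhr⟩ : ∃ h ∈ G, ¬ RayEquiv (fun n => h (r n)) r := by
    by_contra! H
    exact hgd.1 ⟨r, hr, H⟩
  have hNs : ∀ n ∈ N, RayEquiv (fun k => n (h (r k))) (fun k => h (r k)) := fun n hn => by
    simpa only [Equiv.Perm.mul_apply, Equiv.Perm.coe_inv, Equiv.apply_symm_apply] using
      (hNr _ (inv_mul_mul_mem_of_normalizes hnorm hh hn)).map h
  obtain ⟨ℓ, hℓ, hℓr, hℓs⟩ := hT.exists_isLine hr (hr.map (hG h hh)) fun H => hhr H.symm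
  have hNℓ : ∀ n ∈ N, ∀ v ∈ Set.range ℓ, n v ∈ Set.range ℓ := by
    rintro n hn _ ⟨a, rfl⟩
    exact hℓ.apply_mem_range hT (hN n hn) (((hℓr.map n).trans (hNr n hn)).trans hℓr.symm)
      (((hℓs.map n).trans (hNs n hn)).trans hℓs.symm) a
  have hsurj : Set.range ℓ = Set.univ := by
    by_contra hne
    exact hT.not_stabilizesProperSubtree hG hgd hN hNnt hnorm
      ⟨_, Set.range_nonempty ℓ, hℓ.isConvex_range hT, hne, hNℓ⟩
  exact hline (hℓ.ncard_neighborSet hT (Set.range_eq_univ.1 hsurj))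

end SimpleGraph.IsTree

end Actions

theorem normalized_subgroup_geomDense_general {V : Type*}
    (T : SimpleGraph V) (hT : T.IsTree) (hline : NotLine T)
    (G : Subgroup (Equiv.Perm V)) (hG : ∀ g ∈ G, IsTreeAut T g)
    (hgd : GeomDense T (G : Set (Equiv.Perm V)))
    (N : Subgroup (Equiv.Perm V)) (hN : ∀ n ∈ N, IsTreeAut T n)
    (hNnt : N ≠ ⊥)
    (hnorm : ∀ g ∈ G, ∀ n ∈ N, g * n * g⁻¹ ∈ N) :
    GeomDense T (N : Set (Equiv.Perm V)) :=
  ⟨hT.not_fixesEnd hline hG hgd hN hNnt hnorm, hT.not_stabilizesProperSubtree hG hgd hN hNnt hnorm⟩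

/-- A nontrivial subgroup of Aut(T) normalized by a geometrically dense group is itself
geometrically dense. -/
theorem normalized_subgroup_geomDense {V : Type*} [Countable V]
    (T : SimpleGraph V) (hT : T.IsTree) (hline : NotLine T)
    (G : Subgroup (Equiv.Perm V)) (hG : ∀ g ∈ G, IsTreeAut T g)
    (hinv : ∀ g ∈ G, ¬ IsInversion T g)
    (hgd : GeomDense T (G : Set (Equiv.Perm V)))
    (N : Subgroup (Equiv.Perm V)) (hN : ∀ n ∈ N, IsTreeAut T n)
    (hNnt : N ≠ ⊥)
    (hnorm : ∀ g ∈ G, ∀ n ∈ N, g * n * g⁻¹ ∈ N) :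
    GeomDense T (N : Set (Equiv.Perm V)) :=
  normalized_subgroup_geomDense_general T hT hline G hG hgd N hN hNnt hnorm
end

section
/- Let T_d be the d-regular tree with d ≥ 3, let l be a legal labelling of T_d, and let U^{(l)}({id}) be the group of automorphisms g of T_d with c(g,x) = id for every vertex x (the label-preserving automorphisms). Then U^{(l)}({id}) is isomorphic to the free product of d copies of ℤ/2ℤ, generated by the d label-respecting inversions of the edges at any fixed base vertex. -/
structure LegalLabelling {V : Type*} (T : SimpleGraph V) (d : ℕ) where
  label : V → V → Fin d
  symm : ∀ u v : V, T.Adj u v → label u v = label v u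
  inj : ∀ ⦃x u w : V⦄, T.Adj x u → T.Adj x w → label x u = label x w → u = w
  surj : ∀ (x : V) (i : Fin d), ∃ w : V, T.Adj x w ∧ label x w = i

/-- Membership in the Burger–Mozes universal group U^{(l)}(F). -/
def InU {V : Type*} {d : ℕ} (T : SimpleGraph V) (l : LegalLabelling T d)
    (F : Subgroup (Equiv.Perm (Fin d))) (g : Equiv.Perm V) : Prop :=
  IsTreeAut T g ∧
    ∀ x : V, ∃ a ∈ F, ∀ w : V, T.Adj x w → l.label (g x) (g w) = a (l.label x w)

/-- The universal group U^{(l)}(F) as a subgroup of the permutations of the vertices. -/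
def Usub {V : Type*} {d : ℕ} (T : SimpleGraph V) (l : LegalLabelling T d)
    (F : Subgroup (Equiv.Perm (Fin d))) : Subgroup (Equiv.Perm V) where
  carrier := {g | InU T l F g}
  one_mem' := ⟨fun _ _ => Iff.rfl, fun _ => ⟨1, one_mem F, fun _ _ => rfl⟩⟩
  mul_mem' := by
    rintro g h ⟨hg1, hg2⟩ ⟨hh1, hh2⟩
    refine ⟨fun u v => (hg1 (h u) (h v)).trans (hh1 u v), fun x => ?_⟩
    obtain ⟨a, ha, hag⟩ := hg2 (h x)
    obtain ⟨c, hc, hch⟩ := hh2 x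
    refine ⟨a * c, mul_mem ha hc, fun w hw => ?_⟩
    have hw' : T.Adj (h x) (h w) := (hh1 x w).mpr hw
    calc l.label (g (h x)) (g (h w)) = a (l.label (h x) (h w)) := hag (h w) hw'
      _ = a (c (l.label x w)) := by rw [hch w hw]
      _ = (a * c) (l.label x w) := rfl
  inv_mem' := by
    rintro g ⟨hg1, hg2⟩
    constructor
    · intro u v
      have h2 := hg1 (g⁻¹ u) (g⁻¹ v)
      rw [Equiv.Perm.coe_inv, Equiv.apply_symm_apply, Equiv.apply_symm_apply] at h2
      exact h2.symm
    · intro x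
      obtain ⟨a, ha, hag⟩ := hg2 (g⁻¹ x)
      refine ⟨a⁻¹, inv_mem ha, fun w hw => ?_⟩
      have hw' : T.Adj (g⁻¹ x) (g⁻¹ w) := by
        have h2 := hg1 (g⁻¹ x) (g⁻¹ w)
        rw [Equiv.Perm.coe_inv, Equiv.apply_symm_apply, Equiv.apply_symm_apply] at h2
        exact h2.mp hw
      have key := hag (g⁻¹ w) hw'
      rw [Equiv.Perm.coe_inv, Equiv.apply_symm_apply, Equiv.apply_symm_apply] at key
      rw [key, Equiv.Perm.coe_inv, Equiv.Perm.coe_inv, Equiv.symm_apply_apply]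


abbrev UniversalCoxeterGroup (ι : Type*) := Monoid.CoprodI fun _ : ι => Multiplicative (ZMod 2)

namespace UniversalCoxeterGroup

open Monoid

variable {ι : Type*}

def gen (i : ι) : UniversalCoxeterGroup ι :=
  CoprodI.of (i := i) (Multiplicative.ofAdd 1)

lemma of_eq_gen {i : ι} {m : Multiplicative (ZMod 2)} (hm : m ≠ 1) :
    CoprodI.of (i := i) m = gen i := by
  obtain rfl : m = .ofAdd 1 := by revert m; decide
  rfl

lemma gen_inv (i : ι) : (gen i)⁻¹ = gen i := by
  rw [gen, ← map_inv]
  rfl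

lemma closure_range_gen :
    Subgroup.closure (Set.range (gen : ι → UniversalCoxeterGroup ι)) = ⊤ := by
  refine eq_top_iff.mpr fun g _ => CoprodI.induction_on g (one_mem _) (fun i m => ?_)
    (fun _ _ => mul_mem)
  by_cases hm : m = 1
  · simp [hm, one_mem]
  · exact of_eq_gen hm ▸ Subgroup.subset_closure ⟨i, rfl⟩

noncomputable def lift {G : Type*} [Group G] (f : ι → G) (hf : ∀ i, f i * f i = 1) :
    UniversalCoxeterGroup ι →* G :=
  CoprodI.lift fun i => AddMonoidHom.toMultiplicativeLeft <| ZMod.lift 2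
    ⟨zmultiplesHom (Additive G) (Additive.ofMul (f i)), by simp [two_zsmul, ← ofMul_mul, hf]⟩

lemma lift_gen {G : Type*} [Group G] (f : ι → G) (hf : ∀ i, f i * f i = 1) (i : ι) :
    lift f hf (gen i) = f i := by
  rw [lift, gen, CoprodI.lift_of, ← Int.cast_one]
  simp only [AddMonoidHom.toMultiplicativeLeft_apply_apply, toAdd_ofAdd, ZMod.lift_coe]
  simp

end UniversalCoxeterGroup

section RegularAction

variable {G X : Type*} [Group G] {θ : G →* Equiv.Perm X} {x₀ : X}

noncomputable def rightRegularPerm (hθ : Function.Bijective fun g => θ g x₀) :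
    G →* Equiv.Perm X :=
  (Equiv.ofBijective _ hθ).permCongrHom.toMonoidHom.comp
    ((MulAction.toPermHom Gᵐᵒᵖ G).comp (MulEquiv.inv' G).toMonoidHom)

variable (hθ : Function.Bijective fun g => θ g x₀)

lemma rightRegularPerm_apply (h g : G) :
    rightRegularPerm hθ h (θ g x₀) = θ (g * h⁻¹) x₀ := by
  change Equiv.permCongr (Equiv.ofBijective _ hθ) _ (Equiv.ofBijective _ hθ g) = _
  rw [Equiv.permCongr_apply, Equiv.symm_apply_apply]
  rfl

lemma rightRegularPerm_injective : Function.Injective (rightRegularPerm hθ) := by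
  refine (injective_iff_map_eq_one _).mpr fun h hh => inv_eq_one.mp (hθ.1 ?_)
  simpa [hh] using (rightRegularPerm_apply hθ h 1).symm

lemma range_rightRegularPerm :
    (rightRegularPerm hθ).range = Subgroup.centralizer (θ.range : Set (Equiv.Perm X)) := by
  ext c
  simp only [MonoidHom.mem_range, Subgroup.mem_centralizer_iff, SetLike.mem_coe]
  constructor
  · rintro ⟨h, rfl⟩ _ ⟨k, rfl⟩
    ext x
    obtain ⟨g, rfl⟩ := hθ.2 x
    simp [← Equiv.Perm.mul_apply (θ k), ← map_mul, rightRegularPerm_apply, mul_assoc]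
  · intro hc
    obtain ⟨k, hk⟩ := hθ.2 (c x₀)
    refine ⟨k⁻¹, Equiv.ext fun x => ?_⟩
    obtain ⟨g, rfl⟩ := hθ.2 x
    have := congrArg (· x₀) (hc (θ g) ⟨g, rfl⟩)
    simp only [Equiv.Perm.mul_apply] at this
    rw [rightRegularPerm_apply, inv_inv, ← this, ← hk, map_mul, Equiv.Perm.mul_apply]

end RegularAction

namespace LegalLabelling

variable {V : Type*} {T : SimpleGraph V} {d : ℕ} (l : LegalLabelling T d)

noncomputable def nbr (x : V) (i : Fin d) : V :=
  (l.surj x i).choose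

lemma adj_nbr (x : V) (i : Fin d) : T.Adj x (l.nbr x i) :=
  (l.surj x i).choose_spec.1

lemma label_nbr (x : V) (i : Fin d) : l.label x (l.nbr x i) = i :=
  (l.surj x i).choose_spec.2

lemma nbr_label {x w : V} (h : T.Adj x w) : l.nbr x (l.label x w) = w :=
  l.inj (l.adj_nbr x _) h (l.label_nbr x _)

lemma nbr_nbr (x : V) (i : Fin d) : l.nbr (l.nbr x i) i = x := by
  have hadj := (l.adj_nbr x i).symm
  simpa [← l.symm _ _ hadj.symm, l.label_nbr] using l.nbr_label hadj

lemma nbr_injective (x : V) : Function.Injective (l.nbr x) := fun i j h => by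
  rw [← l.label_nbr x i, h, l.label_nbr]

noncomputable def nbrPerm (i : Fin d) : Equiv.Perm V :=
  Function.Involutive.toPerm (l.nbr · i) (l.nbr_nbr · i)

@[simp]
lemma nbrPerm_apply (i : Fin d) (x : V) : l.nbrPerm i x = l.nbr x i := rfl

lemma nbrPerm_mul_self (i : Fin d) : l.nbrPerm i * l.nbrPerm i = 1 :=
  Equiv.ext (l.nbr_nbr · i)

lemma map_adj_of_map_nbr {g : Equiv.Perm V} (hg : ∀ x i, g (l.nbr x i) = l.nbr (g x) i)
    {u v : V} (h : T.Adj u v) : T.Adj (g u) (g v) ∧ l.label (g u) (g v) = l.label u v := by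
  rw [← l.nbr_label h, hg]
  exact ⟨l.adj_nbr _ _, by rw [l.label_nbr, l.label_nbr]⟩

theorem Usub_bot_eq_centralizer :
    Usub T l ⊥ = Subgroup.centralizer (Set.range l.nbrPerm) := by
  ext g
  simp only [Subgroup.mem_centralizer_iff, Set.forall_mem_range, Equiv.ext_iff,
    Equiv.Perm.mul_apply, nbrPerm_apply]
  constructor
  · rintro ⟨hadj, hlab⟩ i x
    obtain ⟨a, ha, hlab⟩ := hlab x
    obtain rfl : a = 1 := Subgroup.mem_bot.mp ha
    exact l.inj (l.adj_nbr (g x) i) ((hadj _ _).mpr (l.adj_nbr x i))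
      (by rw [hlab _ (l.adj_nbr x i), l.label_nbr, l.label_nbr]; rfl)
  · intro hg
    have hmap : ∀ x i, g (l.nbr x i) = l.nbr (g x) i := fun x i => (hg i x).symm
    have hmap_inv : ∀ x i, g⁻¹ (l.nbr x i) = l.nbr (g⁻¹ x) i := fun x i =>
      g.injective (by rw [← hg]; simp)
    refine ⟨fun u v => ⟨fun h => ?_, fun h => (l.map_adj_of_map_nbr hmap h).1⟩,
      fun x => ⟨1, one_mem _, fun w hw => (l.map_adj_of_map_nbr hmap hw).2⟩⟩
    simpa using (l.map_adj_of_map_nbr hmap_inv h).1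

open UniversalCoxeterGroup

noncomputable def action : UniversalCoxeterGroup (Fin d) →* Equiv.Perm V :=
  UniversalCoxeterGroup.lift l.nbrPerm l.nbrPerm_mul_self

lemma action_gen (i : Fin d) : l.action (gen i) = l.nbrPerm i :=
  lift_gen _ _ i

lemma range_action : l.action.range = Subgroup.closure (Set.range l.nbrPerm) := by
  rw [MonoidHom.range_eq_map, ← closure_range_gen, MonoidHom.map_closure, ← Set.range_comp]
  exact congrArg _ (congrArg Set.range (funext l.action_gen))

noncomputable def follow (x : V) : List (Fin d) → V
  | [] => x
  | i :: L => l.nbr (follow x L) i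

lemma follow_eq_prod (x : V) (L : List (Fin d)) : l.follow x L = (L.map l.nbrPerm).prod x := by
  induction L with
  | nil => rfl
  | cons i L ih => simp [follow, ih, Equiv.Perm.mul_apply]

noncomputable def walk (x : V) : (L : List (Fin d)) → T.Walk (l.follow x L) x
  | [] => .nil
  | i :: L => .cons (l.adj_nbr _ i).symm (walk x L)

lemma length_walk (x : V) (L : List (Fin d)) : (l.walk x L).length = L.length := by
  induction L with
  | nil => rfl
  | cons i L ih => exact congrArg (· + 1) ih

lemma isPath_walk (hT : T.IsAcyclic) (x : V) {L : List (Fin d)} (hL : L.IsChain (· ≠ ·)) :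
    (l.walk x L).IsPath := by
  induction L with
  | nil => exact .nil
  | cons i L ih =>
    refine (SimpleGraph.Walk.cons_isPath_iff _ _).mpr ⟨ih hL.tail, fun hmem => ?_⟩
    have hsnd := hT.eq_snd_of_adj_start (ih hL.tail) (l.adj_nbr _ i) hmem
    cases L with
    | nil => exact (l.adj_nbr x i).ne hsnd.symm
    | cons j L =>
      refine List.rel_of_isChain_cons_cons hL (l.nbr_injective (l.follow x (j :: L)) ?_)
      rw [hsnd]
      change (l.walk x L).getVert 0 = l.nbr (l.nbr (l.follow x L) j) j
      rw [SimpleGraph.Walk.getVert_zero, l.nbr_nbr]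

lemma follow_ne_self (hT : T.IsAcyclic) (x : V) {L : List (Fin d)} (hL : L.IsChain (· ≠ ·))
    (hne : L ≠ []) : l.follow x L ≠ x := by
  intro h
  have hnil := SimpleGraph.Walk.isPath_iff_nil.mp
    (((l.walk x L).isPath_copy h rfl).mpr (l.isPath_walk hT x hL))
  rw [← SimpleGraph.Walk.length_eq_zero_iff, SimpleGraph.Walk.length_copy, length_walk] at hnil
  exact hne (List.length_eq_zero_iff.mp hnil)

lemma action_wordProd_apply (w : Monoid.CoprodI.Word fun _ : Fin d => Multiplicative (ZMod 2))
    (x : V) : l.action w.prod x = l.follow x (w.toList.map Sigma.fst) := by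
  rw [follow_eq_prod, Monoid.CoprodI.Word.prod, map_list_prod, List.map_map, List.map_map]
  congr 2
  exact List.map_congr_left fun p hp => by
    simp only [Function.comp_apply, of_eq_gen (w.ne_one p hp), action_gen]

lemma injective_action_apply (hT : T.IsAcyclic) (b : V) :
    Function.Injective fun g => l.action g b := by
  suffices hfree : ∀ k, l.action k b = b → k = 1 by
    intro g h hgh
    refine inv_mul_eq_one.mp (hfree _ ?_)
    simp only at hgh
    rw [map_mul, map_inv, Equiv.Perm.mul_apply, ← hgh, Equiv.Perm.inv_def, Equiv.symm_apply_apply]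
  intro k hk
  obtain ⟨w, rfl⟩ := Monoid.CoprodI.Word.equiv.symm.surjective k
  by_contra hw
  refine l.follow_ne_self hT b ((List.isChain_map _).mpr w.chain_ne) ?_
    ((l.action_wordProd_apply w b).symm.trans hk)
  rw [Ne, List.map_eq_nil_iff]
  rintro hnil
  exact hw (by simp [Monoid.CoprodI.Word.equiv, Monoid.CoprodI.Word.prod, hnil])

lemma surjective_action_apply (hT : T.Preconnected) (b : V) :
    Function.Surjective fun g => l.action g b := by
  intro v
  obtain ⟨p⟩ := hT v b
  induction p with
  | nil => exact ⟨1, rfl⟩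
  | @cons u w _ h p ih =>
    obtain ⟨g, hg⟩ := ih
    refine ⟨gen (l.label w u) * g, ?_⟩
    simp only at hg ⊢
    rw [map_mul, Equiv.Perm.mul_apply, hg, action_gen, nbrPerm_apply, l.nbr_label h.symm]

lemma bijective_action_apply (hT : T.IsTree) (b : V) :
    Function.Bijective fun g => l.action g b :=
  ⟨l.injective_action_apply hT.2 b, l.surjective_action_apply hT.1.preconnected b⟩

variable {l} {b : V} (hb : Function.Bijective fun g => l.action g b)

lemma rightRegularPerm_gen_apply_self (i : Fin d) :
    rightRegularPerm hb (gen i) b = l.nbr b i := by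
  simpa [gen_inv, l.action_gen] using rightRegularPerm_apply hb (gen i) 1

lemma rightRegularPerm_gen_apply_nbr (i : Fin d) :
    rightRegularPerm hb (gen i) (l.nbr b i) = b := by
  simpa [l.action_gen] using rightRegularPerm_apply hb (gen i) (gen i)

end LegalLabelling

open LegalLabelling UniversalCoxeterGroup

theorem universal_group_trivial_F_free_product_general {V : Type*} (T : SimpleGraph V)
    (hT : T.IsTree) (d : ℕ) (l : LegalLabelling T d) :
    (∀ b : V, Usub T l (⊥ : Subgroup (Equiv.Perm (Fin d))) =
      Subgroup.closure {σ : Equiv.Perm V |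
        InU T l (⊥ : Subgroup (Equiv.Perm (Fin d))) σ ∧
        ∃ w : V, T.Adj b w ∧ σ b = w ∧ σ w = b}) ∧
    Nonempty (↥(Usub T l (⊥ : Subgroup (Equiv.Perm (Fin d)))) ≃*
      Monoid.CoprodI (fun _ : Fin d => Multiplicative (ZMod 2))) := by
  have hU (b : V) : Usub T l ⊥ = (rightRegularPerm (l.bijective_action_apply hT b)).range := by
    rw [range_rightRegularPerm, l.Usub_bot_eq_centralizer, l.range_action,
      Subgroup.centralizer_closure]
  refine ⟨fun b => le_antisymm ?_ ((Subgroup.closure_le _).mpr fun σ hσ => hσ.1), ?_⟩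
  · rw [hU b, MonoidHom.range_eq_map, ← closure_range_gen, MonoidHom.map_closure,
      ← Set.range_comp]
    exact Subgroup.closure_mono (Set.range_subset_iff.mpr fun i =>
      ⟨(hU b).ge ⟨_, rfl⟩, l.nbr b i, l.adj_nbr b i, rightRegularPerm_gen_apply_self _ i,
        rightRegularPerm_gen_apply_nbr _ i⟩)
  · obtain ⟨b⟩ := hT.1.nonempty
    exact ⟨((MonoidHom.ofInjective (rightRegularPerm_injective _)).trans
      (MulEquiv.subgroupCongr (hU b).symm)).symm⟩

/-- U^{(l)}({id}) is generated by the label-respecting inversions of the edges at any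
fixed base vertex b, and is isomorphic to the free product ℤ/2 ∗ ⋯ ∗ ℤ/2 of d copies of
ℤ/2ℤ. -/
theorem universal_group_trivial_F_free_product {V : Type*} (T : SimpleGraph V)
    (hT : T.IsTree) (d : ℕ) (hd : 3 ≤ d) (l : LegalLabelling T d) :
    (∀ b : V, Usub T l (⊥ : Subgroup (Equiv.Perm (Fin d))) =
      Subgroup.closure {σ : Equiv.Perm V |
        InU T l (⊥ : Subgroup (Equiv.Perm (Fin d))) σ ∧
        ∃ w : V, T.Adj b w ∧ σ b = w ∧ σ w = b}) ∧
    Nonempty (↥(Usub T l (⊥ : Subgroup (Equiv.Perm (Fin d)))) ≃*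
      Monoid.CoprodI (fun _ : Fin d => Multiplicative (ZMod 2))) :=
  universal_group_trivial_F_free_product_general T hT d l
end

section
/- Let F ≤ S_d and let l be a legal labelling of the d-regular tree T_d (d ≥ 3). Then: (i) U^{(l)}(F) is a closed subgroup of Aut(T_d) in the topology of pointwise convergence on vertices; (ii) U^{(l)}(F) is locally permutation isomorphic to F, i.e., for every vertex b the stabilizer of b in U^{(l)}(F) induces on E(b) exactly the permutations l_b^{-1} ∘ a ∘ l_b for a ∈ F; (iii) U^{(l)}(F) acts transitively on the vertices of T_d. -/
/-- The topology of pointwise convergence on vertices (vertices being discrete). -/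
def permTop (V : Type*) : TopologicalSpace (Equiv.Perm V) :=
  TopologicalSpace.induced (fun g : Equiv.Perm V => (g : V → V))
    (@Pi.topologicalSpace V (fun _ => V) (fun _ => ⊥))

/-!
Call `φ` a map with constant local action `a` if `c(φ, x) = a` at every vertex `x`. On a
connected graph such a map is determined by the image of a single vertex. On a tree it exists for
every `a` and every prescribed image `b ↦ b'`: the vertex reached from `b` along the labels
`i₁, …, iₙ` goes to the vertex reached from `b'` along `a i₁, …, a iₙ`. Its inverse is the map
with action `a⁻¹` sending `b'` back to `b`. Taking `a ∈ F` gives (ii) and `a = 1` gives (iii).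
The group is closed because each condition in its definition involves only one vertex and its
finitely many neighbours.
-/

open scoped Topology

namespace LegalLabelling

variable {V : Type*} {d : ℕ} {T : SimpleGraph V} (l : LegalLabelling T d)

noncomputable def step (x : V) (i : Fin d) : V := (l.surj x i).choose

lemma adj_step (x : V) (i : Fin d) : T.Adj x (l.step x i) := (l.surj x i).choose_spec.1

lemma label_step (x : V) (i : Fin d) : l.label x (l.step x i) = i := (l.surj x i).choose_spec.2

lemma step_label {x w : V} (h : T.Adj x w) : l.step x (l.label x w) = w :=
  l.inj (l.adj_step x _) h (l.label_step x _)

lemma step_step (x : V) (i : Fin d) : l.step (l.step x i) i = x := by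
  have h := l.adj_step x i
  simpa only [← l.symm _ _ h, l.label_step] using l.step_label h.symm

def HasConstLocalAction (a : Equiv.Perm (Fin d)) (φ : V → V) : Prop :=
  ∀ ⦃v w : V⦄, T.Adj v w → φ w = l.step (φ v) (a (l.label v w))

variable {l}

lemma hasConstLocalAction_id : l.HasConstLocalAction 1 id :=
  fun _ _ h => (l.step_label h).symm

namespace HasConstLocalAction

variable {a c : Equiv.Perm (Fin d)} {φ ψ : V → V}

lemma adj (hφ : l.HasConstLocalAction a φ) {v w : V} (h : T.Adj v w) : T.Adj (φ v) (φ w) :=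
  hφ h ▸ l.adj_step _ _

lemma label (hφ : l.HasConstLocalAction a φ) {v w : V} (h : T.Adj v w) :
    l.label (φ v) (φ w) = a (l.label v w) :=
  hφ h ▸ l.label_step _ _

lemma comp (hψ : l.HasConstLocalAction c ψ) (hφ : l.HasConstLocalAction a φ) :
    l.HasConstLocalAction (c * a) (ψ ∘ φ) := fun v w h => by
  simp only [Function.comp_apply, hψ (hφ.adj h), hφ.label h, Equiv.Perm.mul_apply]

lemma eq_of_apply_eq (hconn : T.Connected) (hφ : l.HasConstLocalAction a φ)
    (hψ : l.HasConstLocalAction a ψ) {b : V} (hb : φ b = ψ b) : φ = ψ := by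
  funext v
  obtain ⟨p⟩ := hconn.preconnected b v
  induction p with
  | nil => exact hb
  | cons h _ ih => exact ih (by rw [hφ h, hψ h, hb])

end HasConstLocalAction

end LegalLabelling

lemma SimpleGraph.IsAcyclic.eq_concat_or_eq_concat {V : Type*} {T : SimpleGraph V}
    (hT : T.IsAcyclic) {b v w : V} {p : T.Walk b v} {q : T.Walk b w} (hp : p.IsPath)
    (hq : q.IsPath) (h : T.Adj v w) : q = p.concat h ∨ p = q.concat h.symm := by
  by_cases hv : v ∈ q.support
  · exact .inl (hT.path_concat hp hq h hv)
  · exact .inr (hT.path_concat hq hp h.symm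
      (hT.mem_support_of_ne_mem_support_of_adj_of_isPath hp hq h hv))

namespace LegalLabelling

variable {V : Type*} {d : ℕ} {T : SimpleGraph V} (l : LegalLabelling T d)

lemma exists_hasConstLocalAction (hT : T.IsTree) (a : Equiv.Perm (Fin d)) (b b' : V) :
    ∃ φ : V → V, l.HasConstLocalAction a φ ∧ φ b = b' := by
  choose p hp using fun v => (hT.existsUnique_path b v).exists
  let follow : V → T.Dart → V := fun x e => l.step x (a (l.label e.fst e.snd))
  refine ⟨fun v => (p v).darts.foldl follow b', fun v w h => ?_, ?_⟩
  · rcases hT.isAcyclic.eq_concat_or_eq_concat (hp v) (hp w) h with hw | hv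
    · simp only [hw, SimpleGraph.Walk.darts_concat, List.concat_eq_append, List.foldl_append,
        List.foldl_cons, List.foldl_nil, follow]
    · simp only [hv, SimpleGraph.Walk.darts_concat, List.concat_eq_append, List.foldl_append,
        List.foldl_cons, List.foldl_nil, follow, l.symm _ _ h, step_step]
  · simp only [(hT.existsUnique_path b b).unique (hp b) SimpleGraph.Walk.IsPath.nil,
      SimpleGraph.Walk.darts_nil, List.foldl_nil]

lemma exists_perm_hasConstLocalAction (hT : T.IsTree) (a : Equiv.Perm (Fin d)) (b b' : V) :
    ∃ g : Equiv.Perm V, l.HasConstLocalAction a g ∧ g b = b' := by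
  obtain ⟨φ, hφ, hφb⟩ := l.exists_hasConstLocalAction hT a b b'
  obtain ⟨ψ, hψ, hψb⟩ := l.exists_hasConstLocalAction hT a⁻¹ b' b
  have hψφ : ψ ∘ φ = id := by
    have h := hψ.comp hφ
    rw [inv_mul_cancel] at h
    exact h.eq_of_apply_eq hT.connected hasConstLocalAction_id (b := b) (by simp [hφb, hψb])
  have hφψ : φ ∘ ψ = id := by
    have h := hφ.comp hψ
    rw [mul_inv_cancel] at h
    exact h.eq_of_apply_eq hT.connected hasConstLocalAction_id (b := b') (by simp [hφb, hψb])
  exact ⟨⟨φ, ψ, congrFun hψφ, congrFun hφψ⟩, hφ, hφb⟩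

variable {l}

lemma HasConstLocalAction.isTreeAut {a : Equiv.Perm (Fin d)} {g : Equiv.Perm V}
    (hg : l.HasConstLocalAction a g) : IsTreeAut T g := by
  refine fun u v => ⟨fun h => ?_, hg.adj⟩
  have hu := l.adj_step u (a⁻¹ (l.label (g u) (g v)))
  have hv : l.step u (a⁻¹ (l.label (g u) (g v))) = v :=
    g.injective <| by
      rw [hg hu, l.label_step, Equiv.Perm.coe_inv, a.apply_symm_apply, l.step_label h]
  rwa [hv] at hu

lemma HasConstLocalAction.inU {F : Subgroup (Equiv.Perm (Fin d))} {a : Equiv.Perm (Fin d)}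
    {g : Equiv.Perm V} (hg : l.HasConstLocalAction a g) (ha : a ∈ F) : InU T l F g :=
  ⟨hg.isTreeAut, fun _ => ⟨a, ha, fun _ h => hg.label h⟩⟩

end LegalLabelling

lemma IsTreeAut.mul {V : Type*} {T : SimpleGraph V} {g h : Equiv.Perm V} (hg : IsTreeAut T g)
    (hh : IsTreeAut T h) : IsTreeAut T (g * h) :=
  fun u v => (hg (h u) (h v)).trans (hh u v)

lemma IsTreeAut.inv {V : Type*} {T : SimpleGraph V} {g : Equiv.Perm V} (hg : IsTreeAut T g) :
    IsTreeAut T g⁻¹ :=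
  fun u v => by rw [← hg, Equiv.Perm.coe_inv, g.apply_symm_apply, g.apply_symm_apply]

section UniversalGroup

variable {V : Type*} {d : ℕ} (T : SimpleGraph V) (l : LegalLabelling T d)
  (F : Subgroup (Equiv.Perm (Fin d)))

def universalGroup : Subgroup (Equiv.Perm V) where
  carrier := {g | InU T l F g}
  one_mem' := ⟨fun _ _ => Iff.rfl, fun _ => ⟨1, F.one_mem, fun _ _ => rfl⟩⟩
  mul_mem' := by
    rintro g h ⟨hgT, hgL⟩ ⟨hhT, hhL⟩
    refine ⟨hgT.mul hhT, fun x => ?_⟩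
    obtain ⟨ah, hah, hh⟩ := hhL x
    obtain ⟨ag, hag, hg⟩ := hgL (h x)
    refine ⟨ag * ah, F.mul_mem hag hah, fun w hw => ?_⟩
    rw [Equiv.Perm.mul_apply, Equiv.Perm.mul_apply, Equiv.Perm.mul_apply,
      hg _ ((hhT x w).mpr hw), hh _ hw]
  inv_mem' := by
    rintro g ⟨hgT, hgL⟩
    refine ⟨hgT.inv, fun x => ?_⟩
    obtain ⟨a, ha, hg⟩ := hgL (g⁻¹ x)
    refine ⟨a⁻¹, F.inv_mem ha, fun w hw => ?_⟩
    have h := hg _ ((hgT.inv x w).mpr hw)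
    simp only [Equiv.Perm.coe_inv, Equiv.apply_symm_apply] at h ⊢
    rw [h, a.symm_apply_apply]

end UniversalGroup

lemma isClosed_setOf_restrict {V : Type*} {t : Set V} (ht : t.Finite) (P : (t → V) → Prop) :
    IsClosed[permTop V] {g : Equiv.Perm V | P fun v : t => g v} := by
  let _ : TopologicalSpace V := ⊥
  have : DiscreteTopology V := ⟨rfl⟩
  have := ht.to_subtype
  let _ := permTop V
  have hcont : Continuous fun (g : Equiv.Perm V) (v : t) => g v :=
    continuous_pi fun v => (continuous_apply v.1).comp continuous_induced_dom
  exact (isClosed_discrete {f | P f}).preimage hcont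

lemma LegalLabelling.finite_neighborSet {V : Type*} {d : ℕ} {T : SimpleGraph V}
    (l : LegalLabelling T d) (x : V) : (T.neighborSet x).Finite :=
  Set.Finite.of_finite_image (Set.toFinite _) fun _ hu _ hw => l.inj hu hw

lemma isClosed_setOf_inU {V : Type*} {d : ℕ} (T : SimpleGraph V) (l : LegalLabelling T d)
    (F : Subgroup (Equiv.Perm (Fin d))) : IsClosed[permTop V] {g | InU T l F g} := by
  let _ := permTop V
  have hAdj (u v : V) : IsClosed {g : Equiv.Perm V | T.Adj (g u) (g v) ↔ T.Adj u v} :=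
    isClosed_setOf_restrict (t := {u, v}) (Set.toFinite _)
      fun f => T.Adj (f ⟨u, by simp⟩) (f ⟨v, by simp⟩) ↔ T.Adj u v
  have hLocal (x : V) : IsClosed {g : Equiv.Perm V |
      ∃ a ∈ F, ∀ w, T.Adj x w → l.label (g x) (g w) = a (l.label x w)} :=
    isClosed_setOf_restrict ((l.finite_neighborSet x).insert x) fun f => ∃ a ∈ F, ∀ w
      (hw : T.Adj x w), l.label (f ⟨x, Set.mem_insert _ _⟩) (f ⟨w, Set.mem_insert_of_mem _ hw⟩) =
        a (l.label x w)
  have hU : {g | InU T l F g} = (⋂ u, ⋂ v, {g : Equiv.Perm V | T.Adj (g u) (g v) ↔ T.Adj u v}) ∩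
      ⋂ x, {g | ∃ a ∈ F, ∀ w, T.Adj x w → l.label (g x) (g w) = a (l.label x w)} := by
    ext g
    simp only [InU, IsTreeAut, Set.mem_ofPred_eq, Set.mem_inter_iff, Set.mem_iInter]
  rw [hU]
  exact (isClosed_iInter fun u => isClosed_iInter (hAdj u)).inter (isClosed_iInter hLocal)

theorem universal_group_basic_properties_general {V : Type*} (T : SimpleGraph V)
    (hT : T.IsTree) (d : ℕ) (l : LegalLabelling T d)
    (F : Subgroup (Equiv.Perm (Fin d))) :
    -- (i) U^{(l)}(F) is closed (it is a subgroup by `Usub` elsewhere)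
    (@IsClosed (Equiv.Perm V) (permTop V) {g : Equiv.Perm V | InU T l F g} ∧
      ∃ H : Subgroup (Equiv.Perm V),
        (H : Set (Equiv.Perm V)) = {g : Equiv.Perm V | InU T l F g}) ∧
    -- (ii) locally permutation isomorphic to F: at every vertex b, the stabilizer of b
    -- induces on E(b) exactly the permutations l_b⁻¹ ∘ a ∘ l_b, a ∈ F
    (∀ b : V,
      (∀ a ∈ F, ∃ g : Equiv.Perm V, InU T l F g ∧ g b = b ∧
        ∀ w : V, T.Adj b w → l.label b (g w) = a (l.label b w)) ∧
      (∀ g : Equiv.Perm V, InU T l F g → g b = b →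
        ∃ a ∈ F, ∀ w : V, T.Adj b w → l.label b (g w) = a (l.label b w))) ∧
    -- (iii) vertex-transitivity
    (∀ b b' : V, ∃ g : Equiv.Perm V, InU T l F g ∧ g b = b') := by
  refine ⟨⟨isClosed_setOf_inU T l F, universalGroup T l F, rfl⟩, fun b => ⟨?_, ?_⟩, ?_⟩
  · intro a ha
    obtain ⟨g, hg, hgb⟩ := l.exists_perm_hasConstLocalAction hT a b b
    exact ⟨g, hg.inU ha, hgb, fun w hw => by simpa only [hgb] using hg.label hw⟩
  · intro g hg hgb
    obtain ⟨a, ha, hlabel⟩ := hg.2 b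
    exact ⟨a, ha, fun w hw => by simpa only [hgb] using hlabel w hw⟩
  · intro b b'
    obtain ⟨g, hg, hgb⟩ := l.exists_perm_hasConstLocalAction hT 1 b b'
    exact ⟨g, hg.inU F.one_mem, hgb⟩

theorem universal_group_basic_properties {V : Type*} (T : SimpleGraph V)
    (hT : T.IsTree) (d : ℕ) (hd : 3 ≤ d) (l : LegalLabelling T d)
    (F : Subgroup (Equiv.Perm (Fin d))) :
    -- (i) U^{(l)}(F) is closed (it is a subgroup by `Usub` elsewhere)
    (@IsClosed (Equiv.Perm V) (permTop V) {g : Equiv.Perm V | InU T l F g} ∧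
      ∃ H : Subgroup (Equiv.Perm V),
        (H : Set (Equiv.Perm V)) = {g : Equiv.Perm V | InU T l F g}) ∧
    -- (ii) locally permutation isomorphic to F: at every vertex b, the stabilizer of b
    -- induces on E(b) exactly the permutations l_b⁻¹ ∘ a ∘ l_b, a ∈ F
    (∀ b : V,
      (∀ a ∈ F, ∃ g : Equiv.Perm V, InU T l F g ∧ g b = b ∧
        ∀ w : V, T.Adj b w → l.label b (g w) = a (l.label b w)) ∧
      (∀ g : Equiv.Perm V, InU T l F g → g b = b →
        ∃ a ∈ F, ∀ w : V, T.Adj b w → l.label b (g w) = a (l.label b w))) ∧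
    -- (iii) vertex-transitivity
    (∀ b b' : V, ∃ g : Equiv.Perm V, InU T l F g ∧ g b = b') :=
  universal_group_basic_properties_general T hT d l F
end

section
/- Let F ≤ S_d be a transitive permutation group and let H ≤ Aut(T_d) (d ≥ 3) be vertex-transitive and locally permutation isomorphic to F, i.e., for every vertex x there is a bijection λ_x : E(x) → {1,…,d} such that the permutation group induced by the stabilizer of x in H on E(x) equals λ_x^{-1} ∘ F ∘ λ_x. Then there exists a legal labelling l of T_d such that H ≤ U^{(l)}(F). -/
theorem exists_compatible_along_parent {α β : Type*} (par : α → α) (r : α) (f : α → ℕ)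
    (hf : ∀ x, x ≠ r → f (par x) < f x) (P : α → β → Prop) (Q : α → β → β → Prop)
    (hr : ∃ b, P r b) (hstep : ∀ x, x ≠ r → ∀ b, P (par x) b → ∃ c, P x c ∧ Q x c b) :
    ∃ c : α → β, (∀ x, P x (c x)) ∧ ∀ x, x ≠ r → Q x (c x) (c (par x)) := by
  classical
  let c : ∀ x, {b // P x b} := (measure f).wf.fix fun x ih =>
    if hx : x = r then ⟨hr.choose, hx ▸ hr.choose_spec⟩
    else
      let b := ih (par x) (hf x hx)
      ⟨(hstep x hx b.1 b.2).choose, (hstep x hx b.1 b.2).choose_spec.1⟩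
  refine ⟨fun x => c x, fun x => (c x).2, fun x hx => ?_⟩
  show Q x (c x).1 (c (par x)).1
  rw [show c x = _ from (measure f).wf.fix_eq _ x, dif_neg hx]
  exact (hstep x hx _ (c (par x)).2).choose_spec.2

namespace SimpleGraph.IsTree

variable {V : Type*} {G : SimpleGraph V} (hG : G.IsTree) (x₀ : V)

noncomputable def pathFrom (x : V) : G.Walk x₀ x :=
  (hG.existsUnique_path x₀ x).exists.choose

theorem isPath_pathFrom (x : V) : (hG.pathFrom x₀ x).IsPath :=
  (hG.existsUnique_path x₀ x).exists.choose_spec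

theorem eq_pathFrom {x : V} {p : G.Walk x₀ x} (hp : p.IsPath) : p = hG.pathFrom x₀ x :=
  (hG.existsUnique_path x₀ x).unique hp (hG.isPath_pathFrom x₀ x)

noncomputable def parent (x : V) : V :=
  (hG.pathFrom x₀ x).penultimate

variable {x₀}

theorem not_nil_pathFrom {x : V} (hx : x ≠ x₀) : ¬(hG.pathFrom x₀ x).Nil := by
  rw [(hG.isPath_pathFrom x₀ x).nil_iff_eq]
  exact hx.symm

theorem parent_adj {x : V} (hx : x ≠ x₀) : G.Adj (hG.parent x₀ x) x :=
  Walk.adj_penultimate (hG.not_nil_pathFrom hx)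

theorem length_pathFrom_parent_lt {x : V} (hx : x ≠ x₀) :
    (hG.pathFrom x₀ (hG.parent x₀ x)).length < (hG.pathFrom x₀ x).length := by
  unfold parent
  rw [← hG.eq_pathFrom x₀ (hG.isPath_pathFrom x₀ x).dropLast,
    ← Walk.length_dropLast_add_one (hG.not_nil_pathFrom hx)]
  exact Nat.lt_succ_self _

theorem eq_parent_of_mem_support {u v : V} (huv : G.Adj u v)
    (hu : u ∈ (hG.pathFrom x₀ v).support) : v ≠ x₀ ∧ u = hG.parent x₀ v := by
  refine ⟨?_, hG.isAcyclic.eq_penultimate_of_adj_end (hG.isPath_pathFrom x₀ v) huv.symm hu⟩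
  rintro rfl
  rw [Walk.nil_iff_support_eq.mp (Walk.isPath_iff_nil.mp (hG.isPath_pathFrom v v)),
    List.mem_singleton] at hu
  exact huv.ne hu

theorem eq_parent_or_eq_parent {u v : V} (huv : G.Adj u v) :
    (v ≠ x₀ ∧ u = hG.parent x₀ v) ∨ (u ≠ x₀ ∧ v = hG.parent x₀ u) := by
  by_cases hu : u ∈ (hG.pathFrom x₀ v).support
  · exact .inl (hG.eq_parent_of_mem_support huv hu)
  · refine .inr (hG.eq_parent_of_mem_support huv.symm ?_)
    exact hG.isAcyclic.mem_support_of_ne_mem_support_of_adj_of_isPath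
      (hG.isPath_pathFrom x₀ u) (hG.isPath_pathFrom x₀ v) huv hu

end SimpleGraph.IsTree

theorem IsTreeAut.adj_inv_apply_iff {V : Type*} {T : SimpleGraph V} {g : Equiv.Perm V}
    (hg : IsTreeAut T g) {u v : V} : T.Adj u (g⁻¹ v) ↔ T.Adj (g u) v := by
  simpa using (hg u (g⁻¹ v)).symm

section Charts

variable {V : Type*} {T : SimpleGraph V} {d : ℕ} {F : Subgroup (Equiv.Perm (Fin d))}
  {H : Subgroup (Equiv.Perm V)} {lam : V → V → Fin d}

-- Precomposing an element of `H` with an element of the stabiliser of `x₀` acts on the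
-- labels at `x₀` through `F`, and `F` is transitive.
theorem exists_mem_apply_eq_and_label_eq (hFt : ∀ i j : Fin d, ∃ a ∈ F, a i = j)
    (hHaut : ∀ h ∈ H, IsTreeAut T h) (hHtrans : ∀ x y : V, ∃ h ∈ H, h x = y)
    (hloc2 : ∀ x : V, ∀ a ∈ F,
      ∃ h ∈ H, h x = x ∧ ∀ w : V, T.Adj x w → lam x (h w) = a (lam x w))
    (x₀ : V) {x y : V} (hxy : T.Adj x y) (i : Fin d) :
    ∃ g, (g ∈ H ∧ g x₀ = x) ∧ lam x₀ (g⁻¹ y) = i := by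
  obtain ⟨h, hH, hx⟩ := hHtrans x₀ x
  have hadj : T.Adj x₀ (h⁻¹ y) := (hHaut h hH).adj_inv_apply_iff.mpr (hx ▸ hxy)
  obtain ⟨a, haF, ha⟩ := hFt (lam x₀ (h⁻¹ y)) i
  obtain ⟨k, hkH, hkx, hk⟩ := hloc2 x₀ a haF
  refine ⟨h * k⁻¹, ⟨mul_mem hH (inv_mem hkH), ?_⟩, ?_⟩
  · rw [Equiv.Perm.mul_apply, Equiv.Perm.inv_eq_iff_eq.mpr hkx.symm, hx]
  · rw [mul_inv_rev, inv_inv, Equiv.Perm.mul_apply, hk _ hadj, ha]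

def chartLabel (lam : V → V → Fin d) (x₀ : V) (c : V → Equiv.Perm V) (x w : V) : Fin d :=
  lam x₀ ((c x)⁻¹ w)

variable {x₀ : V} {c : V → Equiv.Perm V}

theorem chartLabel_inj
    (hlaminj : ∀ ⦃x u w : V⦄, T.Adj x u → T.Adj x w → lam x u = lam x w → u = w)
    (hcaut : ∀ x, IsTreeAut T (c x)) (hc₀ : ∀ x, c x x₀ = x) ⦃x u w : V⦄ (hu : T.Adj x u)
    (hw : T.Adj x w) (h : chartLabel lam x₀ c x u = chartLabel lam x₀ c x w) : u = w :=
  (c x)⁻¹.injective <| hlaminj ((hcaut x).adj_inv_apply_iff.mpr ((hc₀ x).symm ▸ hu))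
    ((hcaut x).adj_inv_apply_iff.mpr ((hc₀ x).symm ▸ hw)) h

theorem chartLabel_surj (hlamsurj : ∀ (x : V) (i : Fin d), ∃ w : V, T.Adj x w ∧ lam x w = i)
    (hcaut : ∀ x, IsTreeAut T (c x)) (hc₀ : ∀ x, c x x₀ = x) (x : V) (i : Fin d) :
    ∃ w : V, T.Adj x w ∧ chartLabel lam x₀ c x w = i := by
  obtain ⟨w, hw, rfl⟩ := hlamsurj x₀ i
  refine ⟨c x w, ?_, by simp [chartLabel]⟩
  rwa [← hcaut x, hc₀ x] at hw

theorem chartLabel_apply_apply (hloc1 : ∀ x : V, ∀ h ∈ H, h x = x →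
      ∃ a ∈ F, ∀ w : V, T.Adj x w → lam x (h w) = a (lam x w))
    (hcH : ∀ x, c x ∈ H) (hcaut : ∀ x, IsTreeAut T (c x)) (hc₀ : ∀ x, c x x₀ = x)
    {g : Equiv.Perm V} (hg : g ∈ H) (x : V) :
    ∃ a ∈ F, ∀ w : V, T.Adj x w →
      chartLabel lam x₀ c (g x) (g w) = a (chartLabel lam x₀ c x w) := by
  set k := (c (g x))⁻¹ * g * c x
  have hk₀ : k x₀ = x₀ := by simp [k, hc₀, Equiv.symm_apply_eq]
  obtain ⟨a, haF, ha⟩ := hloc1 x₀ k (mul_mem (mul_mem (inv_mem (hcH _)) hg) (hcH x)) hk₀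
  refine ⟨a, haF, fun w hw => ?_⟩
  have hw₀ : T.Adj x₀ ((c x)⁻¹ w) := (hcaut x).adj_inv_apply_iff.mpr ((hc₀ x).symm ▸ hw)
  simpa [k, chartLabel] using ha _ hw₀

end Charts

theorem universal_group_universality_general {V : Type*} (T : SimpleGraph V)
    (hT : T.IsTree) (d : ℕ)
    (F : Subgroup (Equiv.Perm (Fin d))) (hFt : ∀ i j : Fin d, ∃ a ∈ F, a i = j)
    (H : Subgroup (Equiv.Perm V)) (hHaut : ∀ h ∈ H, IsTreeAut T h)
    (hHtrans : ∀ x y : V, ∃ h ∈ H, h x = y)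
    (lam : V → V → Fin d)
    (hlaminj : ∀ ⦃x u w : V⦄, T.Adj x u → T.Adj x w → lam x u = lam x w → u = w)
    (hlamsurj : ∀ (x : V) (i : Fin d), ∃ w : V, T.Adj x w ∧ lam x w = i)
    (hloc1 : ∀ x : V, ∀ h ∈ H, h x = x →
      ∃ a ∈ F, ∀ w : V, T.Adj x w → lam x (h w) = a (lam x w))
    (hloc2 : ∀ x : V, ∀ a ∈ F,
      ∃ h ∈ H, h x = x ∧ ∀ w : V, T.Adj x w → lam x (h w) = a (lam x w)) :
    ∃ l : LegalLabelling T d, ∀ h ∈ H, InU T l F h := by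
  obtain ⟨x₀⟩ := hT.connected.nonempty
  obtain ⟨c, hc, hc_parent⟩ := exists_compatible_along_parent (hT.parent x₀) x₀
    (fun x => (hT.pathFrom x₀ x).length) (fun _ hx => hT.length_pathFrom_parent_lt hx)
    (fun x g => g ∈ H ∧ g x₀ = x)
    (fun x g g' => lam x₀ (g⁻¹ (hT.parent x₀ x)) = lam x₀ (g'⁻¹ x)) ⟨1, H.one_mem, rfl⟩
    fun x hx _ _ => exists_mem_apply_eq_and_label_eq hFt hHaut hHtrans hloc2 x₀
      (hT.parent_adj hx).symm _
  have hcaut x : IsTreeAut T (c x) := hHaut _ (hc x).1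
  have hc₀ x : c x x₀ = x := (hc x).2
  refine ⟨⟨chartLabel lam x₀ c, fun u v huv => ?_, chartLabel_inj hlaminj hcaut hc₀,
    chartLabel_surj hlamsurj hcaut hc₀⟩, fun g hg =>
      ⟨hHaut g hg, chartLabel_apply_apply hloc1 (fun x => (hc x).1) hcaut hc₀ hg⟩⟩
  rcases hT.eq_parent_or_eq_parent (x₀ := x₀) huv with ⟨hv, rfl⟩ | ⟨hu, rfl⟩
  · exact (hc_parent v hv).symm
  · exact hc_parent u hu

/-- Universality of U^{(l)}(F): a vertex-transitive group of automorphisms of the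
d-regular tree which is locally permutation isomorphic to a transitive F ≤ S_d is
contained in U^{(l)}(F) for a suitable legal labelling l.  Local permutation isomorphy is
witnessed by bijections λ_x from the edges at x to {1,…,d} conjugating the local action
of the stabilizer of x in H exactly onto F. -/
theorem universal_group_universality {V : Type*} (T : SimpleGraph V)
    (hT : T.IsTree) (d : ℕ) (hd : 3 ≤ d)
    (F : Subgroup (Equiv.Perm (Fin d))) (hFt : ∀ i j : Fin d, ∃ a ∈ F, a i = j)
    (H : Subgroup (Equiv.Perm V)) (hHaut : ∀ h ∈ H, IsTreeAut T h)
    (hHtrans : ∀ x y : V, ∃ h ∈ H, h x = y)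
    (lam : V → V → Fin d)
    (hlaminj : ∀ ⦃x u w : V⦄, T.Adj x u → T.Adj x w → lam x u = lam x w → u = w)
    (hlamsurj : ∀ (x : V) (i : Fin d), ∃ w : V, T.Adj x w ∧ lam x w = i)
    (hloc1 : ∀ x : V, ∀ h ∈ H, h x = x →
      ∃ a ∈ F, ∀ w : V, T.Adj x w → lam x (h w) = a (lam x w))
    (hloc2 : ∀ x : V, ∀ a ∈ F,
      ∃ h ∈ H, h x = x ∧ ∀ w : V, T.Adj x w → lam x (h w) = a (lam x w)) :
    ∃ l : LegalLabelling T d, ∀ h ∈ H, InU T l F h :=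
  universal_group_universality_general T hT d F hFt H hHaut hHtrans lam hlaminj hlamsurj hloc1 hloc2
end

section
/- Let T be a simplicial tree (not a bi-infinite line) and suppose G ≤ Aut(T) is geometrically dense. Then for all natural numbers r ≥ k one has (G^(r))^{+_r} ≤ (G^(k))^{+_k}, and equality (G^(r))^{+_r} = (G^(k))^{+_k} holds if and only if G^(r) = G^(k). -/
/-- The m-neighbourhood of a set of vertices: all vertices at distance at most m. -/
def nbhd {V : Type*} (T : SimpleGraph V) (C : Set V) (m : ℕ) : Set V :=
  {v | ∃ c ∈ C, T.dist v c ≤ m}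

/-- H^{+_k}: the subgroup generated by the pointwise stabilizers in a set S of
automorphisms of the (k-1)-neighbourhoods e^{k-1} of edges e. -/
def plusSubgroup {V : Type*} (T : SimpleGraph V) (S : Set (Equiv.Perm V)) (k : ℕ) :
    Subgroup (Equiv.Perm V) :=
  Subgroup.closure
    {g | g ∈ S ∧ ∃ u v : V, T.Adj u v ∧ ∀ w ∈ nbhd T ({u, v} : Set V) (k-1), g w = w}

/-- The k-closure of a set S of automorphisms of T. -/
def kClosure {V : Type*} (T : SimpleGraph V) (S : Set (Equiv.Perm V)) (k : ℕ) :
    Set (Equiv.Perm V) :=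
  {h : Equiv.Perm V | IsTreeAut T h ∧
    ∀ x : V, ∃ g ∈ S, ∀ v : V, T.dist x v ≤ k → h v = g v}

/-!
Monotonicity is immediate: an element of `G^(r)` fixing `e^{r-1}` lies in `G^(k)` and fixes
`e^{k-1}`.

If the `+`-subgroups agree and `h ∈ G^(k)`, pick an edge `e` at a vertex `x` and `g ∈ G` agreeing
with `h` on `B(x, k) ⊇ e^{k-1}`; then `g⁻¹ h ∈ (G^(k))^{+_k} = (G^(r))^{+_r} ≤ G^(r)`, so
`h ∈ G^(r)`.

Conversely, let `g ∈ G^(k)` fix `e^{k-1}` for an edge `e = (u, v)`. Since `e` is a bridge, a path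
between the two half-trees of `e` runs through `e`, so a `k`-ball meeting both half-trees meets the
far one only inside `e^{k-1}`. Hence the two restrictions of `g` to the half-trees (extended by the
identity) still lie in `G^(k) = G^(r)`, and their product is `g`. Geometric density forbids
leaves (the branching vertices span an invariant subtree) unless `T` is a single edge, so each
half-tree contains `e'^{r-1}` for some edge `e'`, and each restriction is a generator of
`(G^(r))^{+_r}`.
-/

open SimpleGraph

namespace SimpleGraph

variable {V : Type*} {T : SimpleGraph V}

theorem Walk.dist_add_dist_le_length {u v w : V} (p : T.Walk u v) (hw : w ∈ p.support) :
    T.dist u w + T.dist w v ≤ p.length := by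
  classical
  calc T.dist u w + T.dist w v
      ≤ (p.takeUntil w hw).length + (p.dropUntil w hw).length :=
        add_le_add (dist_le _) (dist_le _)
    _ = p.length := by rw [← Walk.length_append, p.take_spec hw]

theorem Walk.IsPath.neighborSet_nontrivial {u v w : V} {p : T.Walk u v} (hp : p.IsPath)
    (hw : w ∈ p.support) (hwu : w ≠ u) (hwv : w ≠ v) : (T.neighborSet w).Nontrivial := by
  obtain ⟨q, r, -, -, rfl⟩ := hp.mem_support_iff_exists_append.mp hw
  have hq : ¬q.Nil := Walk.not_nil_of_ne hwu.symm
  have hr : ¬r.Nil := Walk.not_nil_of_ne hwv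
  exact ⟨q.penultimate, (q.adj_penultimate hq).symm, r.snd, r.adj_snd hr,
    hp.ne_of_mem_support_of_append (r.adj_snd hr).ne' (q.getVert_mem_support _)
      (r.getVert_mem_support _)⟩

theorem IsTree.eq_of_adj_of_dist_eq_add_one (hT : T.IsTree) {u z a b : V} (ha : T.Adj z a)
    (hb : T.Adj z b) (hza : T.dist u z = T.dist u a + 1) (hzb : T.dist u z = T.dist u b + 1) :
    a = b := by
  obtain ⟨p, hp, -⟩ := hT.connected.exists_path_of_dist u z
  have mem_support {c : V} (hc : T.Adj z c) (hzc : T.dist u z = T.dist u c + 1) :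
      c ∈ p.support := by
    obtain ⟨q, hq, hql⟩ := hT.connected.exists_path_of_dist u c
    refine hT.isAcyclic.mem_support_of_ne_mem_support_of_adj_of_isPath hp hq hc fun hzq => ?_
    have := q.dist_add_dist_le_length hzq
    omega
  rw [hT.isAcyclic.eq_penultimate_of_adj_end hp ha (mem_support ha hza),
    hT.isAcyclic.eq_penultimate_of_adj_end hp hb (mem_support hb hzb)]

theorem IsTree.exists_adj_dist_eq_add_one (hT : T.IsTree) {z : V}
    (hz : (T.neighborSet z).Nontrivial) (u : V) :
    ∃ z', T.Adj z z' ∧ T.dist u z' = T.dist u z + 1 := by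
  obtain ⟨a, ha, b, hb, hab⟩ := hz
  rw [mem_neighborSet] at ha hb
  rcases hT.dist_eq_dist_add_one_of_adj u ha with hza | haz
  · rcases hT.dist_eq_dist_add_one_of_adj u hb with hzb | hbz
    · exact absurd (hT.eq_of_adj_of_dist_eq_add_one ha hb hza hzb) hab
    · exact ⟨b, hb, hbz⟩
  · exact ⟨a, ha, haz⟩

def halfTree (T : SimpleGraph V) (u v : V) : Set V :=
  {z | T.dist z u < T.dist z v}

theorem notMem_halfTree_swap {u v z : V} (hz : z ∈ T.halfTree u v) : z ∉ T.halfTree v u :=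
  fun (hz' : T.dist z v < T.dist z u) => lt_asymm hz hz'

theorem IsTree.mem_halfTree_swap (hT : T.IsTree) {u v z : V} (huv : T.Adj u v)
    (hz : z ∉ T.halfTree u v) : z ∈ T.halfTree v u :=
  lt_of_le_of_ne (not_lt.mp hz) (hT.dist_ne_of_adj z huv).symm

theorem IsTree.dist_eq_add_one_of_mem_halfTree (hT : T.IsTree) {u v z : V} (huv : T.Adj u v)
    (hz : z ∈ T.halfTree u v) : T.dist z v = T.dist z u + 1 := by
  have := hT.dist_eq_dist_add_one_of_adj z huv
  have : T.dist z u < T.dist z v := hz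
  omega

theorem IsTree.mem_edges_of_mem_halfTree (hT : T.IsTree) {u v x y : V} (huv : T.Adj u v)
    (hx : x ∈ T.halfTree u v) (hy : y ∈ T.halfTree v u) (p : T.Walk x y) : s(u, v) ∈ p.edges := by
  by_contra hp
  obtain ⟨qx, hqx⟩ := hT.connected.exists_walk_length_eq_dist x u
  obtain ⟨qy, hqy⟩ := hT.connected.exists_walk_length_eq_dist y v
  have hqx' : s(u, v) ∉ qx.edges := fun he => by
    have := qx.dist_add_dist_le_length (qx.snd_mem_support_of_mem_edges he)
    have : T.dist x u < T.dist x v := hx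
    omega
  have hqy' : s(u, v) ∉ qy.edges := fun he => by
    have := qy.dist_add_dist_le_length (qy.fst_mem_support_of_mem_edges he)
    have : T.dist y v < T.dist y u := hy
    omega
  have hbridge := isBridge_iff_forall_walk_mem_edges.mp
    (isAcyclic_iff_forall_adj_isBridge.mp hT.isAcyclic huv) (qx.reverse.append (p.append qy))
  simp [Walk.edges_append, Walk.edges_reverse, hqx', hp, hqy'] at hbridge

theorem IsTree.dist_add_one_add_dist_le (hT : T.IsTree) {u v x y : V} (huv : T.Adj u v)
    (hx : x ∈ T.halfTree u v) (hy : y ∈ T.halfTree v u) :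
    T.dist x u + 1 + T.dist v y ≤ T.dist x y := by
  obtain ⟨p, hp⟩ := hT.connected.exists_walk_length_eq_dist x y
  have := p.dist_add_dist_le_length
    (p.snd_mem_support_of_mem_edges (hT.mem_edges_of_mem_halfTree huv hx hy p))
  have := hT.dist_eq_add_one_of_mem_halfTree huv hx
  omega

theorem IsTree.exists_adj_mem_halfTree_dist_eq_add_one (hT : T.IsTree)
    (hleaf : ∀ z, (T.neighborSet z).Nontrivial) {u v : V} (huv : T.Adj u v) {z : V}
    (hz : z ∈ T.halfTree u v) :
    ∃ z', T.Adj z z' ∧ z' ∈ T.halfTree u v ∧ T.dist z' u = T.dist z u + 1 := by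
  obtain ⟨z', hzz', hz'v⟩ := hT.exists_adj_dist_eq_add_one (hleaf z) v
  have hzv := hT.dist_eq_add_one_of_mem_halfTree huv hz
  have htri : T.dist z' u ≤ T.dist z' z + T.dist z u := hT.connected.dist_triangle
  have hparity := hT.dist_eq_dist_add_one_of_adj z' huv
  rw [dist_eq_one_iff_adj.mpr hzz'.symm] at htri
  rw [dist_comm (u := v), dist_comm (u := v)] at hz'v
  exact ⟨z', hzz', show T.dist z' u < T.dist z' v by omega, by omega⟩

theorem IsTree.exists_mem_halfTree_le_dist (hT : T.IsTree)
    (hleaf : ∀ z, (T.neighborSet z).Nontrivial) {u v : V} (huv : T.Adj u v) (n : ℕ) :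
    ∃ z ∈ T.halfTree u v, n ≤ T.dist z u := by
  induction n with
  | zero => exact ⟨u, by simp [halfTree, dist_eq_one_iff_adj.mpr huv], Nat.zero_le _⟩
  | succ n ih =>
    obtain ⟨z, hz, hzn⟩ := ih
    obtain ⟨z', -, hz', hz'u⟩ := hT.exists_adj_mem_halfTree_dist_eq_add_one hleaf huv hz
    exact ⟨z', hz', by omega⟩

theorem IsTree.exists_adj_nbhd_subset_halfTree (hT : T.IsTree)
    (hleaf : ∀ z, (T.neighborSet z).Nontrivial) {u v : V} (huv : T.Adj u v) (m : ℕ) :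
    ∃ q q', T.Adj q q' ∧ nbhd T {q, q'} m ⊆ T.halfTree u v := by
  obtain ⟨q, hq, hqm⟩ := hT.exists_mem_halfTree_le_dist hleaf huv (m + 1)
  obtain ⟨q', hqq', hq', hq'u⟩ := hT.exists_adj_mem_halfTree_dist_eq_add_one hleaf huv hq
  refine ⟨q, q', hqq', ?_⟩
  rintro w ⟨c, hc, hwc⟩
  have hcu : c ∈ T.halfTree u v ∧ m + 1 ≤ T.dist c u := by
    rcases hc with rfl | rfl
    exacts [⟨hq, hqm⟩, ⟨hq', by omega⟩]
  by_contra hw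
  have := hT.dist_add_one_add_dist_le huv.symm (hT.mem_halfTree_swap huv hw) hcu.1
  rw [dist_comm (u := u)] at this
  omega

theorem eq_or_eq_of_forall_neighborSet_subsingleton (hconn : T.Preconnected)
    (hsub : ∀ z, (T.neighborSet z).Subsingleton) {u v : V} (huv : T.Adj u v) (x : V) :
    x = u ∨ x = v := by
  obtain ⟨p⟩ := hconn x u
  induction p with
  | nil => exact Or.inl rfl
  | @cons x y _ hxy _ ih =>
    rcases ih huv with rfl | rfl
    · exact Or.inr (hsub y hxy.symm huv)
    · exact Or.inl (hsub y hxy.symm huv.symm)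

end SimpleGraph

section

variable {V : Type*} {T : SimpleGraph V}

theorem isConvex_setOf_neighborSet_nontrivial :
    IsConvex T {z | (T.neighborSet z).Nontrivial} := by
  intro a ha b hb p hp w hw
  by_cases hwa : w = a
  · exact hwa ▸ ha
  by_cases hwb : w = b
  · exact hwb ▸ hb
  exact hp.neighborSet_nontrivial hw hwa hwb

namespace IsTreeAut

variable {g h : Equiv.Perm V}

theorem mul_s19 (hg : IsTreeAut T g) (hh : IsTreeAut T h) : IsTreeAut T (g * h) :=
  fun a b => (hg (h a) (h b)).trans (hh a b)

theorem inv_s19 (hg : IsTreeAut T g) : IsTreeAut T g⁻¹ := fun a b => by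
  simpa using (hg (g⁻¹ a) (g⁻¹ b)).symm

theorem neighborSet_nontrivial (hg : IsTreeAut T g) {z : V} (hz : (T.neighborSet z).Nontrivial) :
    (T.neighborSet (g z)).Nontrivial := by
  obtain ⟨a, ha, b, hb, hab⟩ := hz
  exact ⟨g a, (hg z a).mpr ha, g b, (hg z b).mpr hb, g.injective.ne hab⟩

theorem dist_le (hT : T.Connected) (hg : IsTreeAut T g) (x y : V) :
    T.dist (g x) (g y) ≤ T.dist x y := by
  obtain ⟨p, hp⟩ := hT.exists_walk_length_eq_dist x y
  simpa [hp] using SimpleGraph.dist_le (p.map ⟨g, (hg _ _).mpr⟩)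

theorem dist_apply (hT : T.Connected) (hg : IsTreeAut T g) (x y : V) :
    T.dist (g x) (g y) = T.dist x y :=
  (hg.dist_le hT x y).antisymm (by simpa using hg.inv_s19.dist_le hT (g x) (g y))

theorem apply_mem_halfTree_iff (hT : T.Connected) (hg : IsTreeAut T g) {u v : V}
    (hu : g u = u) (hv : g v = v) (z : V) :
    g z ∈ T.halfTree u v ↔ z ∈ T.halfTree u v := by
  conv_lhs => rw [← hu, ← hv]
  simp only [halfTree, Set.mem_ofPred_eq, hg.dist_apply hT]

theorem of_forall_exists
    (hloc : ∀ x, ∃ g, IsTreeAut T g ∧ ∀ y, T.dist x y ≤ 1 → h y = g y) : IsTreeAut T h := by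
  intro a b
  obtain ⟨g, hg, hgh⟩ := hloc a
  have hha : h a = g a := hgh a (by simp)
  refine ⟨fun hab => ?_, fun hab => ?_⟩
  · have hab' : T.Adj a (g⁻¹ (h b)) :=
      (hg a _).mp (by simpa [← hha] using hab)
    have : h (g⁻¹ (h b)) = h b := by
      simpa using hgh _ (dist_eq_one_iff_adj.mpr hab').le
    rwa [h.injective this] at hab'
  · rw [hha, hgh b (dist_eq_one_iff_adj.mpr hab).le]
    exact (hg a b).mpr hab

end IsTreeAut

theorem GeomDense.neighborSet_nontrivial {S : Set (Equiv.Perm V)}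
    (hS : ∀ g ∈ S, IsTreeAut T g) (hgd : GeomDense T S)
    (hbranch : ∃ z, (T.neighborSet z).Nontrivial) (z : V) : (T.neighborSet z).Nontrivial := by
  by_contra hz
  exact hgd.2 ⟨_, hbranch, isConvex_setOf_neighborSet_nontrivial,
    fun huniv => hz (Set.eq_univ_iff_forall.mp huniv z),
    fun g hg _ hw => (hS g hg).neighborSet_nontrivial hw⟩

theorem mem_nbhd_pair {u v w : V} {m : ℕ} :
    w ∈ nbhd T {u, v} m ↔ T.dist w u ≤ m ∨ T.dist w v ≤ m := by
  simp [nbhd]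

theorem left_mem_nbhd_pair {u v : V} {m : ℕ} : u ∈ nbhd T {u, v} m :=
  mem_nbhd_pair.mpr (.inl (by simp))

theorem right_mem_nbhd_pair {u v : V} {m : ℕ} : v ∈ nbhd T {u, v} m :=
  mem_nbhd_pair.mpr (.inr (by simp))

theorem SimpleGraph.IsTree.mem_nbhd_of_dist_le (hT : T.IsTree) {u v x y : V} {k : ℕ}
    (huv : T.Adj u v) (hx : x ∈ T.halfTree u v) (hy : y ∈ T.halfTree v u) (hxy : T.dist x y ≤ k) :
    y ∈ nbhd T {u, v} (k - 1) := by
  have := hT.dist_add_one_add_dist_le huv hx hy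
  rw [mem_nbhd_pair, dist_comm (u := y) (v := v)]
  omega

variable {S : Set (Equiv.Perm V)} {G : Subgroup (Equiv.Perm V)} {k r : ℕ}

theorem kClosure_anti (hkr : k ≤ r) : kClosure T S r ⊆ kClosure T S k := fun _ ⟨hh, hloc⟩ =>
  ⟨hh, fun x => (hloc x).imp fun _ ⟨hg, hgh⟩ => ⟨hg, fun y hy => hgh y (hy.trans hkr)⟩⟩

theorem subset_kClosure (hS : ∀ g ∈ S, IsTreeAut T g) (k : ℕ) : S ⊆ kClosure T S k :=
  fun g hg => ⟨hS g hg, fun _ => ⟨g, hg, fun _ _ => rfl⟩⟩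

theorem mem_kClosure_of_forall_exists (hS : ∀ g ∈ S, IsTreeAut T g) (hk : 1 ≤ k)
    {h : Equiv.Perm V} (hloc : ∀ x, ∃ g ∈ S, ∀ y, T.dist x y ≤ k → h y = g y) :
    h ∈ kClosure T S k :=
  ⟨IsTreeAut.of_forall_exists fun x => (hloc x).imp fun g ⟨hg, hgh⟩ =>
    ⟨hS g hg, fun y hy => hgh y (hy.trans hk)⟩, hloc⟩

theorem plusSubgroup_kClosure_anti (hkr : k ≤ r) :
    plusSubgroup T (kClosure T S r) r ≤ plusSubgroup T (kClosure T S k) k :=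
  Subgroup.closure_mono fun _ ⟨hg, u, v, huv, hfix⟩ =>
    ⟨kClosure_anti hkr hg, u, v, huv, fun _ ⟨c, hc, hwc⟩ => hfix _ ⟨c, hc, by omega⟩⟩

def kClosureSubgroup (hT : T.Connected) (hG : ∀ g ∈ G, IsTreeAut T g) (k : ℕ) :
    Subgroup (Equiv.Perm V) where
  carrier := kClosure T G k
  one_mem' := subset_kClosure hG k G.one_mem
  mul_mem' := by
    rintro a b ⟨ha, hla⟩ ⟨hb, hlb⟩
    refine ⟨ha.mul_s19 hb, fun x => ?_⟩
    obtain ⟨gb, hgb, hbx⟩ := hlb x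
    obtain ⟨ga, hga, hax⟩ := hla (b x)
    refine ⟨ga * gb, G.mul_mem hga hgb, fun y hy => ?_⟩
    rw [Equiv.Perm.mul_apply, Equiv.Perm.mul_apply, hax (b y) (by rwa [hb.dist_apply hT]),
      hbx y hy]
  inv_mem' := by
    rintro a ⟨ha, hla⟩
    refine ⟨ha.inv_s19, fun x => ?_⟩
    obtain ⟨g, hg, hax⟩ := hla (a⁻¹ x)
    refine ⟨g⁻¹, G.inv_mem hg, fun y hy => ?_⟩
    rw [Equiv.Perm.eq_inv_iff_eq]
    simpa using (hax (a⁻¹ y) (by rwa [ha.inv_s19.dist_apply hT])).symm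

theorem plusSubgroup_le_kClosureSubgroup (hT : T.Connected) (hG : ∀ g ∈ G, IsTreeAut T g) :
    plusSubgroup T (kClosure T G k) k ≤ kClosureSubgroup hT hG k :=
  (Subgroup.closure_le _).mpr fun _ hg => hg.1

theorem kClosure_eq_of_plusSubgroup_eq (hT : T.Connected) (hG : ∀ g ∈ G, IsTreeAut T g)
    (hk : 1 ≤ k) (hkr : k ≤ r)
    (hplus : plusSubgroup T (kClosure T G r) r = plusSubgroup T (kClosure T G k) k) :
    kClosure T G r = kClosure T G k := by
  refine (kClosure_anti hkr).antisymm fun h hh => ?_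
  rcases subsingleton_or_nontrivial V with hV | hV
  · exact Subsingleton.elim 1 h ▸ (kClosureSubgroup hT hG r).one_mem
  obtain ⟨x⟩ := hT.nonempty
  obtain ⟨y, hxy⟩ := hT.preconnected.exists_adj_of_nontrivial x
  obtain ⟨g, hg, hgh⟩ := hh.2 x
  have hfix : ∀ w ∈ nbhd T {x, y} (k - 1), (g⁻¹ * h) w = w := by
    intro w hw
    have htri : T.dist x w ≤ T.dist x y + T.dist y w := hT.dist_triangle
    rw [dist_eq_one_iff_adj.mpr hxy, dist_comm (u := y)] at htri
    rw [mem_nbhd_pair, dist_comm (u := w)] at hw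
    simp [hgh w (by omega)]
  have hgen : g⁻¹ * h ∈ plusSubgroup T (kClosure T G r) r :=
    hplus ▸ Subgroup.subset_closure ⟨(kClosureSubgroup hT hG k).mul_mem
      (subset_kClosure hG k (G.inv_mem hg)) hh, x, y, hxy, hfix⟩
  have := (kClosureSubgroup hT hG r).mul_mem (subset_kClosure hG r hg)
    (plusSubgroup_le_kClosureSubgroup hT hG hgen)
  rwa [mul_inv_cancel_left] at this

theorem SimpleGraph.IsTree.exists_mem_kClosure_eqOn_halfTree (hT : T.IsTree)
    (hG : ∀ g ∈ G, IsTreeAut T g) (hk : 1 ≤ k) {u v : V} (huv : T.Adj u v) {g : Equiv.Perm V}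
    (hg : g ∈ kClosure T G k) (hfix : ∀ w ∈ nbhd T {u, v} (k - 1), g w = w)
    (hA : ∀ z, g z ∈ T.halfTree u v ↔ z ∈ T.halfTree u v) :
    ∃ g₁ ∈ kClosure T G k, (∀ z ∈ T.halfTree u v, g₁ z = g z) ∧ ∀ z ∈ T.halfTree v u, g₁ z = z := by
  classical
  set g₁ := Equiv.Perm.ofSubtype (g.subtypePerm hA)
  have h₁A : ∀ z ∈ T.halfTree u v, g₁ z = g z := fun _ hz =>
    Equiv.Perm.ofSubtype_subtypePerm_of_mem hA hz
  have h₁B : ∀ z ∈ T.halfTree v u, g₁ z = z := fun _ hz =>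
    Equiv.Perm.ofSubtype_subtypePerm_of_not_mem hA (notMem_halfTree_swap hz)
  refine ⟨g₁, mem_kClosure_of_forall_exists hG hk fun x => ?_, h₁A, h₁B⟩
  by_cases hx : x ∈ T.halfTree u v
  · obtain ⟨a, ha, hga⟩ := hg.2 x
    refine ⟨a, ha, fun y hy => ?_⟩
    by_cases hyA : y ∈ T.halfTree u v
    · rw [h₁A y hyA, hga y hy]
    · have hyB := hT.mem_halfTree_swap huv hyA
      rw [h₁B y hyB, ← hga y hy, hfix y (hT.mem_nbhd_of_dist_le huv hx hyB hy)]
  · refine ⟨1, G.one_mem, fun y hy => ?_⟩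
    by_cases hyA : y ∈ T.halfTree u v
    · have hy' := hT.mem_nbhd_of_dist_le huv.symm (hT.mem_halfTree_swap huv hx) hyA hy
      rw [Set.pair_comm] at hy'
      rw [h₁A y hyA, hfix y hy', Equiv.Perm.one_apply]
    · rw [h₁B y (hT.mem_halfTree_swap huv hyA), Equiv.Perm.one_apply]

theorem SimpleGraph.IsTree.exists_mul_eq_of_forall_mem_nbhd (hT : T.IsTree)
    (hG : ∀ g ∈ G, IsTreeAut T g) (hk : 1 ≤ k) {u v : V} (huv : T.Adj u v)
    {g : Equiv.Perm V} (hg : g ∈ kClosure T G k) (hfix : ∀ w ∈ nbhd T {u, v} (k - 1), g w = w) :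
    ∃ g₁ ∈ kClosure T G k, ∃ g₂ ∈ kClosure T G k,
      (∀ z ∈ T.halfTree v u, g₁ z = z) ∧ (∀ z ∈ T.halfTree u v, g₂ z = z) ∧ g₁ * g₂ = g := by
  have hu := hfix u left_mem_nbhd_pair
  have hv := hfix v right_mem_nbhd_pair
  have hA := hg.1.apply_mem_halfTree_iff hT.connected hu hv
  have hB := hg.1.apply_mem_halfTree_iff hT.connected hv hu
  obtain ⟨g₁, hg₁, h₁A, h₁B⟩ := hT.exists_mem_kClosure_eqOn_halfTree hG hk huv hg hfix hA
  obtain ⟨g₂, hg₂, h₂B, h₂A⟩ := hT.exists_mem_kClosure_eqOn_halfTree hG hk huv.symm hg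
    (by rwa [Set.pair_comm]) hB
  refine ⟨g₁, hg₁, g₂, hg₂, h₁B, h₂A, Equiv.ext fun z => ?_⟩
  rw [Equiv.Perm.mul_apply]
  by_cases hz : z ∈ T.halfTree u v
  · rw [h₂A z hz, h₁A z hz]
  · have hzB := hT.mem_halfTree_swap huv hz
    rw [h₂B z hzB, h₁B (g z) ((hB z).mpr hzB)]

theorem SimpleGraph.IsTree.mem_plusSubgroup_of_forall_mem_halfTree (hT : T.IsTree)
    (hleaf : ∀ z, (T.neighborSet z).Nontrivial) {u v : V} (huv : T.Adj u v)
    {S : Set (Equiv.Perm V)} {g : Equiv.Perm V} (hg : g ∈ S)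
    (hfix : ∀ z ∈ T.halfTree u v, g z = z) (m : ℕ) : g ∈ plusSubgroup T S m :=
  let ⟨q, q', hqq', hsub⟩ := hT.exists_adj_nbhd_subset_halfTree hleaf huv (m - 1)
  Subgroup.subset_closure ⟨hg, q, q', hqq', fun _ hw => hfix _ (hsub hw)⟩

theorem SimpleGraph.IsTree.plusSubgroup_le_of_kClosure_eq (hT : T.IsTree)
    (hG : ∀ g ∈ G, IsTreeAut T g) (hgd : GeomDense T G) (hk : 1 ≤ k)
    (hclosure : kClosure T G r = kClosure T G k) :
    plusSubgroup T (kClosure T G k) k ≤ plusSubgroup T (kClosure T G r) r := by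
  refine (Subgroup.closure_le _).mpr ?_
  rintro g ⟨hg, u, v, huv, hfix⟩
  by_cases hbranch : ∃ z, (T.neighborSet z).Nontrivial
  · have hleaf := hgd.neighborSet_nontrivial hG hbranch
    obtain ⟨g₁, hg₁, g₂, hg₂, h₁, h₂, rfl⟩ := hT.exists_mul_eq_of_forall_mem_nbhd hG hk huv hg hfix
    rw [← hclosure] at hg₁ hg₂
    exact mul_mem (hT.mem_plusSubgroup_of_forall_mem_halfTree hleaf huv.symm hg₁ h₁ r)
      (hT.mem_plusSubgroup_of_forall_mem_halfTree hleaf huv hg₂ h₂ r)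
  · -- `T` is the single edge `(u, v)`, which `g` fixes
    simp only [not_exists, Set.not_nontrivial_iff] at hbranch
    have hg1 : g = 1 := Equiv.ext fun x => by
      rcases eq_or_eq_of_forall_neighborSet_subsingleton hT.connected.preconnected hbranch huv x
        with rfl | rfl
      exacts [hfix _ left_mem_nbhd_pair, hfix _ right_mem_nbhd_pair]
    exact hg1 ▸ one_mem _

end

theorem plus_subgroups_of_kClosures_general {V : Type*}
    (T : SimpleGraph V) (hT : T.IsTree)
    (G : Subgroup (Equiv.Perm V)) (hG : ∀ g ∈ G, IsTreeAut T g)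
    (hgd : GeomDense T (G : Set (Equiv.Perm V)))
    (k r : ℕ) (hk : 1 ≤ k) (hkr : k ≤ r) :
    plusSubgroup T (kClosure T (G : Set (Equiv.Perm V)) r) r ≤
      plusSubgroup T (kClosure T (G : Set (Equiv.Perm V)) k) k ∧
    (plusSubgroup T (kClosure T (G : Set (Equiv.Perm V)) r) r =
        plusSubgroup T (kClosure T (G : Set (Equiv.Perm V)) k) k ↔
      kClosure T (G : Set (Equiv.Perm V)) r = kClosure T (G : Set (Equiv.Perm V)) k) :=
  ⟨plusSubgroup_kClosure_anti hkr,
    ⟨kClosure_eq_of_plusSubgroup_eq hT.connected hG hk hkr, fun hclosure =>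
      (plusSubgroup_kClosure_anti hkr).antisymm
        (hT.plusSubgroup_le_of_kClosure_eq hG hgd hk hclosure)⟩⟩

theorem plus_subgroups_of_kClosures {V : Type*} [Countable V]
    (T : SimpleGraph V) (hT : T.IsTree) (hline : NotLine T)
    (G : Subgroup (Equiv.Perm V)) (hG : ∀ g ∈ G, IsTreeAut T g)
    (hgd : GeomDense T (G : Set (Equiv.Perm V)))
    (k r : ℕ) (hk : 1 ≤ k) (hkr : k ≤ r) :
    plusSubgroup T (kClosure T (G : Set (Equiv.Perm V)) r) r ≤
      plusSubgroup T (kClosure T (G : Set (Equiv.Perm V)) k) k ∧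
    (plusSubgroup T (kClosure T (G : Set (Equiv.Perm V)) r) r =
        plusSubgroup T (kClosure T (G : Set (Equiv.Perm V)) k) k ↔
      kClosure T (G : Set (Equiv.Perm V)) r = kClosure T (G : Set (Equiv.Perm V)) k) :=
  plus_subgroups_of_kClosures_general T hT G hG hgd k r hk hkr
end
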